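/- arXiv:2505.23995 — 7 statements merged into one kernel-verified Lean document; each statement's English description precedes it below -/
import Mathlib

section
/- Let n, d ≥ 2 and let (S, A) be a partial 2-(n^d, n, 1)-design such that for every block ℓ ∈ A and every point P ∉ ℓ there are at most (n^d − 1)/(n − 1) − n blocks of A containing P and disjoint from ℓ. If Q is a point of valency (n^d − 1)/(n − 1) − 1, then any two points A, B each of which is unjoined to Q are unjoined to each other. -/
/-!
Let `r = (n^d - 1)/(n - 1) = 1 + n + ⋯ + n^(d-1) ≥ n + 1`, and suppose `X, Y` lie on a
block `L`. Then `Q ∉ L`. Of the `r - 1` blocks through `Q`, at most `r - n` are disjoint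
from `L`, so at least `n - 1` meet `L`. Distinct blocks through `Q` meet `L` in distinct
points, none of which is `X` or `Y`, so at most `n - 2` blocks through `Q` meet `L`.
-/

open Finset

/-- The valency of a point `X`: the number of blocks of `B` containing `X`. -/
def valency {α : Type*} [DecidableEq α] (B : Finset (Finset α)) (X : α) : ℕ :=
  (B.filter (fun L => X ∈ L)).card

theorem succ_le_geomSum_div {n d : ℕ} (hn : 2 ≤ n) (hd : 2 ≤ d) :
    n + 1 ≤ (n ^ d - 1) / (n - 1) := by
  rw [← Nat.geomSum_eq hn]
  calc n + 1 = ∑ k ∈ range 2, n ^ k := by simp [Finset.sum_range_succ, add_comm]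
    _ ≤ ∑ k ∈ range d, n ^ k :=
      Finset.sum_le_sum_of_subset (Finset.range_subset_range.mpr hd)

section PartialDesign

variable {α : Type*} [DecidableEq α]

theorem valency_eq_card_disjoint_add_card_meeting (A : Finset (Finset α)) (Q : α)
    (L : Finset α) :
    valency A Q = (A.filter (fun M => Q ∈ M ∧ M ∩ L = ∅)).card
      + (A.filter (fun M => Q ∈ M ∧ (M ∩ L).Nonempty)).card := by
  simp only [valency, ← Finset.filter_filter, ← Finset.not_nonempty_iff_eq_empty]
  rw [add_comm]
  exact (Finset.card_filter_add_card_filter_not fun M => (M ∩ L).Nonempty).symm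

theorem card_blocks_meeting_le_card_joined {S : Finset α} {A : Finset (Finset α)}
    (hdesign : ∀ P ∈ S, ∀ Q ∈ S, P ≠ Q →
      (A.filter (fun L => P ∈ L ∧ Q ∈ L)).card ≤ 1)
    {Q : α} (hQ : Q ∈ S) {L : Finset α} (hLS : L ⊆ S) (hQL : Q ∉ L) :
    (A.filter (fun M => Q ∈ M ∧ (M ∩ L).Nonempty)).card
      ≤ (L.filter (fun P => ∃ M ∈ A, P ∈ M ∧ Q ∈ M)).card := by
  set joined := L.filter (fun P => ∃ M ∈ A, P ∈ M ∧ Q ∈ M)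
  have hcover : A.filter (fun M => Q ∈ M ∧ (M ∩ L).Nonempty)
      ⊆ joined.biUnion (fun P => A.filter (fun M => Q ∈ M ∧ P ∈ M)) := by
    intro M hM
    obtain ⟨hMA, hQM, P, hPM⟩ := Finset.mem_filter.mp hM
    rw [Finset.mem_inter] at hPM
    exact Finset.mem_biUnion.mpr
      ⟨P, Finset.mem_filter.mpr ⟨hPM.2, M, hMA, hPM.1, hQM⟩,
        Finset.mem_filter.mpr ⟨hMA, hQM, hPM.1⟩⟩
  calc _ ≤ _ := Finset.card_le_card hcover
    _ ≤ ∑ P ∈ joined, (A.filter (fun M => Q ∈ M ∧ P ∈ M)).card := Finset.card_biUnion_le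
    _ ≤ ∑ _P ∈ joined, 1 := by
      refine Finset.sum_le_sum fun P hP => ?_
      have hPL := (Finset.mem_filter.mp hP).1
      exact hdesign Q hQ P (hLS hPL) (fun h => hQL (h ▸ hPL))
    _ = joined.card := by simp

end PartialDesign

theorem stmt_0_general {α : Type*} [DecidableEq α] (n d : ℕ) (hn : 2 ≤ n) (hd : 2 ≤ d)
    (S : Finset α) (A : Finset (Finset α))
    (hblocks : ∀ L ∈ A, L ⊆ S ∧ L.card = n)
    (hdesign : ∀ P ∈ S, ∀ Q ∈ S, P ≠ Q → (A.filter (fun L => P ∈ L ∧ Q ∈ L)).card ≤ 1)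
    (hpar : ∀ ℓ ∈ A, ∀ P ∈ S, P ∉ ℓ →
      (A.filter (fun M => P ∈ M ∧ M ∩ ℓ = ∅)).card ≤ (n ^ d - 1) / (n - 1) - n)
    (Q : α) (hQ : Q ∈ S)
    (hval : valency A Q = (n ^ d - 1) / (n - 1) - 1)
    (X : α) (Y : α) (hXY : X ≠ Y)
    (hXQ : ¬ ∃ L ∈ A, X ∈ L ∧ Q ∈ L) (hYQ : ¬ ∃ L ∈ A, Y ∈ L ∧ Q ∈ L) :
    ¬ ∃ L ∈ A, X ∈ L ∧ Y ∈ L := by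
  rintro ⟨L, hLA, hXL, hYL⟩
  obtain ⟨hLS, hLcard⟩ := hblocks L hLA
  have hQL : Q ∉ L := fun h => hXQ ⟨L, hLA, hXL, h⟩
  have hr := succ_le_geomSum_div hn hd
  have hsplit := valency_eq_card_disjoint_add_card_meeting A Q L
  have hdisjoint := hpar L hLA Q hQ hQL
  have hmeeting := card_blocks_meeting_le_card_joined hdesign hQ hLS hQL
  have hjoined : (L.filter (fun P => ∃ M ∈ A, P ∈ M ∧ Q ∈ M)).card
      ≤ ((L.erase X).erase Y).card := by
    refine Finset.card_le_card fun P hP => ?_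
    obtain ⟨hPL, hPQ⟩ := Finset.mem_filter.mp hP
    exact Finset.mem_erase.mpr ⟨fun h => hYQ (h ▸ hPQ),
      Finset.mem_erase.mpr ⟨fun h => hXQ (h ▸ hPQ), hPL⟩⟩
  rw [Finset.card_erase_of_mem (Finset.mem_erase.mpr ⟨hXY.symm, hYL⟩),
    Finset.card_erase_of_mem hXL, hLcard] at hjoined
  omega

/-- in a partial 2-(n^d, n, 1)-design in which, for every block ℓ and point
P ∉ ℓ, at most (n^d-1)/(n-1) - n blocks through P are disjoint from ℓ, any two points
unjoined to a point Q of valency (n^d-1)/(n-1) - 1 are unjoined to each other. -/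
theorem stmt_0 {α : Type*} [DecidableEq α] (n d : ℕ) (hn : 2 ≤ n) (hd : 2 ≤ d)
    (S : Finset α) (A : Finset (Finset α))
    (hS : S.card = n ^ d)
    (hblocks : ∀ L ∈ A, L ⊆ S ∧ L.card = n)
    (hdesign : ∀ P ∈ S, ∀ Q ∈ S, P ≠ Q → (A.filter (fun L => P ∈ L ∧ Q ∈ L)).card ≤ 1)
    (hpar : ∀ ℓ ∈ A, ∀ P ∈ S, P ∉ ℓ →
      (A.filter (fun M => P ∈ M ∧ M ∩ ℓ = ∅)).card ≤ (n ^ d - 1) / (n - 1) - n)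
    (Q : α) (hQ : Q ∈ S)
    (hval : valency A Q = (n ^ d - 1) / (n - 1) - 1)
    (X : α) (hX : X ∈ S) (Y : α) (hY : Y ∈ S) (hXY : X ≠ Y)
    (hXQ : ¬ ∃ L ∈ A, X ∈ L ∧ Q ∈ L) (hYQ : ¬ ∃ L ∈ A, Y ∈ L ∧ Q ∈ L) :
    ¬ ∃ L ∈ A, X ∈ L ∧ Y ∈ L :=
  stmt_0_general n d hn hd S A hblocks hdesign hpar Q hQ hval X Y hXY hXQ hYQ
end

section
/- Let n, d ≥ 2 and let (S, A) be a partial 2-(n^d, n, 1)-design such that for every block ℓ ∈ A and every point P ∉ ℓ there are at most (n^d − 1)/(n − 1) − n blocks of A containing P and disjoint from ℓ. If at most one point of S has valency less than (n^d − 1)/(n − 1) − 1, then (S, A) can be completed to a full 2-(n^d, n, 1)-design. -/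
open Finset

/-- The set of points of `S` distinct from `P` and not collinear with `P`. -/
def ncset {α : Type*} [DecidableEq α] (S : Finset α) (A : Finset (Finset α)) (P : α) :
    Finset α :=
  (S.erase P).filter (fun Q => ∀ L ∈ A, ¬(P ∈ L ∧ Q ∈ L))

lemma mem_ncset {α : Type*} [DecidableEq α] {S : Finset α} {A : Finset (Finset α)}
    {P Q : α} :
    Q ∈ ncset S A P ↔ (Q ≠ P ∧ Q ∈ S) ∧ ∀ L ∈ A, ¬(P ∈ L ∧ Q ∈ L) := by
  simp [ncset, Finset.mem_filter, Finset.mem_erase]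

lemma geom_aux (n d : ℕ) (hn : 1 ≤ n) :
    (n - 1) * ∑ i ∈ Finset.range d, n ^ i = n ^ d - 1 := by
  induction d with
  | zero => simp
  | succ d ih =>
    rw [Finset.sum_range_succ, Nat.mul_add, ih]
    have h1 : 1 ≤ n ^ d := Nat.one_le_pow _ _ (by omega)
    have h2 : (n - 1) * n ^ d + n ^ d = n ^ (d + 1) := by
      rw [Nat.sub_one_mul, pow_succ, Nat.mul_comm (n ^ d) n]
      have : n ^ d ≤ n * n ^ d := Nat.le_mul_of_pos_left _ (by omega)
      omega
    have h3 : n ^ d ≤ n ^ (d+1) := Nat.pow_le_pow_right (by omega) (by omega)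
    omega

lemma r_mul (n d : ℕ) (hn : 2 ≤ n) :
    (n - 1) * ((n ^ d - 1) / (n - 1)) = n ^ d - 1 := by
  apply Nat.mul_div_cancel'
  exact ⟨_, (geom_aux n d (by omega)).symm⟩

lemma r_ge (n d : ℕ) (hn : 2 ≤ n) (hd : 2 ≤ d) :
    n + 1 ≤ (n ^ d - 1) / (n - 1) := by
  have h : (n ^ d - 1) / (n - 1) = ∑ i ∈ Finset.range d, n ^ i := by
    rw [← geom_aux n d (by omega), Nat.mul_div_cancel_left _ (by omega)]
  rw [h]
  calc n + 1 = ∑ i ∈ Finset.range 2, n ^ i := by simp [Finset.sum_range_succ]; ring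
    _ ≤ _ := Finset.sum_le_sum_of_subset (Finset.range_subset_range.mpr hd)

lemma partition_count {α : Type*} [DecidableEq α] {S : Finset α} {A : Finset (Finset α)}
    {n : ℕ}
    (hblocks : ∀ L ∈ A, L ⊆ S ∧ L.card = n)
    (hdesign : ∀ P ∈ S, ∀ Q ∈ S, P ≠ Q → (A.filter (fun L => P ∈ L ∧ Q ∈ L)).card ≤ 1)
    {P : α} (hP : P ∈ S) :
    valency A P * (n - 1) + (ncset S A P).card = S.card - 1 := by
  classical
  set T := A.filter (fun L => P ∈ L) with hT
  have hdisj : ∀ L ∈ T, ∀ M ∈ T, L ≠ M → Disjoint (L.erase P) (M.erase P) := by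
    intro L hL M hM hLM
    simp only [hT, mem_filter] at hL hM
    rw [Finset.disjoint_left]
    intro q hq1 hq2
    have hq1' := Finset.mem_of_mem_erase hq1
    have hq2' := Finset.mem_of_mem_erase hq2
    have hqP : q ≠ P := Finset.ne_of_mem_erase hq1
    have hqS : q ∈ S := (hblocks L hL.1).1 hq1'
    have hle := hdesign P hP q hqS (Ne.symm hqP)
    have hL' : L ∈ A.filter (fun L => P ∈ L ∧ q ∈ L) := by
      simp [mem_filter, hL.1, hL.2, hq1']
    have hM' : M ∈ A.filter (fun L => P ∈ L ∧ q ∈ L) := by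
      simp [mem_filter, hM.1, hM.2, hq2']
    exact hLM (Finset.card_le_one.mp hle _ hL' _ hM')
  have hunion : T.biUnion (fun L => L.erase P) ∪ ncset S A P = S.erase P := by
    ext q
    simp only [mem_union, mem_biUnion, ncset, mem_filter, hT]
    constructor
    · rintro (⟨L, hL, hq⟩ | ⟨hq, _⟩)
      · exact Finset.mem_erase.mpr ⟨Finset.ne_of_mem_erase hq,
          (hblocks L hL.1).1 (Finset.mem_of_mem_erase hq)⟩
      · exact hq
    · intro hq
      by_cases h : ∃ L ∈ A, P ∈ L ∧ q ∈ L
      · obtain ⟨L, hL, hPL, hqL⟩ := h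
        exact Or.inl ⟨L, by simp [mem_filter, hL, hPL],
          Finset.mem_erase.mpr ⟨Finset.ne_of_mem_erase hq, hqL⟩⟩
      · push_neg at h
        exact Or.inr ⟨hq, fun L hL hc => h L hL hc.1 hc.2⟩
  have hdisj2 : Disjoint (T.biUnion (fun L => L.erase P)) (ncset S A P) := by
    rw [Finset.disjoint_left]
    intro q hq hq'
    simp only [mem_biUnion, hT, mem_filter] at hq
    obtain ⟨L, hL, hqL⟩ := hq
    simp only [ncset, mem_filter] at hq'
    exact hq'.2 L hL.1 ⟨hL.2, Finset.mem_of_mem_erase hqL⟩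
  have hcard1 : (T.biUnion (fun L => L.erase P)).card = T.card * (n - 1) := by
    rw [Finset.card_biUnion hdisj]
    apply Finset.sum_const_nat
    intro L hL
    simp only [hT, mem_filter] at hL
    rw [Finset.card_erase_of_mem hL.2, (hblocks L hL.1).2]
  have := Finset.card_union_of_disjoint hdisj2
  rw [hunion, Finset.card_erase_of_mem hP, hcard1] at this
  exact this.symm ▸ rfl

/-- If `P ∉ ℓ` has valency ≥ r - 1 then at most one point of `ℓ` is non-collinear
with `P`. -/
lemma meet_bound {α : Type*} [DecidableEq α] {S : Finset α} {A : Finset (Finset α)}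
    {n r : ℕ} (hn : 2 ≤ n)
    (hblocks : ∀ L ∈ A, L ⊆ S ∧ L.card = n)
    (hdesign : ∀ P ∈ S, ∀ Q ∈ S, P ≠ Q → (A.filter (fun L => P ∈ L ∧ Q ∈ L)).card ≤ 1)
    {ℓ : Finset α} (hℓ : ℓ ∈ A) {P : α} (hP : P ∈ S) (hPℓ : P ∉ ℓ)
    (hrn : n + 1 ≤ r)
    (hpar : (A.filter (fun M => P ∈ M ∧ M ∩ ℓ = ∅)).card ≤ r - n)
    (hval : r ≤ valency A P + 1) :
    ∀ Q ∈ ℓ, ∀ R ∈ ℓ, Q ∈ ncset S A P → R ∈ ncset S A P → Q = R := by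
  classical
  set t := ℓ.filter (fun q => ∃ M ∈ A, P ∈ M ∧ q ∈ M) with ht
  set Tm := A.filter (fun M => P ∈ M ∧ ¬(M ∩ ℓ = ∅)) with hTm
  have hsplit : (A.filter (fun M => P ∈ M ∧ M ∩ ℓ = ∅)).card + Tm.card = valency A P := by
    have h := Finset.card_filter_add_card_filter_not
      (s := A.filter (fun M => P ∈ M)) (p := fun M => M ∩ ℓ = ∅)
    rw [Finset.filter_filter, Finset.filter_filter] at h
    exact h
  have hinj : Tm.card ≤ t.card := by
    apply Finset.card_le_card_of_injOn
      (fun M => if h : (M ∩ ℓ).Nonempty then h.choose else P)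
    · intro M hM
      simp only [Finset.mem_coe, hTm, mem_filter] at hM
      have hne : (M ∩ ℓ).Nonempty := Finset.nonempty_iff_ne_empty.mpr hM.2.2
      simp only [Finset.mem_coe]
      rw [dif_pos hne]
      have hq := hne.choose_spec
      rw [Finset.mem_inter] at hq
      exact Finset.mem_filter.mpr ⟨hq.2, M, hM.1, hM.2.1, hq.1⟩
    · intro M hM M' hM' heq
      simp only [Finset.coe_filter, Set.mem_setOf_eq, hTm, mem_filter] at hM hM'
      have hne : (M ∩ ℓ).Nonempty := Finset.nonempty_iff_ne_empty.mpr hM.2.2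
      have hne' : (M' ∩ ℓ).Nonempty := Finset.nonempty_iff_ne_empty.mpr hM'.2.2
      simp only [dif_pos hne, dif_pos hne'] at heq
      have hq := hne.choose_spec
      have hq' := hne'.choose_spec
      rw [Finset.mem_inter] at hq hq'
      set q := hne.choose
      have hq'2 : q ∈ M' ∧ q ∈ ℓ := heq ▸ hq'
      have hqS : q ∈ S := (hblocks ℓ hℓ).1 hq.2
      have hqP : P ≠ q := fun h => hPℓ (h ▸ hq.2)
      have hle := hdesign P hP q hqS hqP
      apply Finset.card_le_one.mp hle
      · exact Finset.mem_filter.mpr ⟨hM.1, hM.2.1, hq.1⟩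
      · exact Finset.mem_filter.mpr ⟨hM'.1, hM'.2.1, hq'2.1⟩
  have htcard : n - 1 ≤ t.card := by omega
  intro Q hQ R hR hQnc hRnc
  by_contra hQR
  have hQt : Q ∉ t := by
    intro hq
    rw [ht, mem_filter] at hq
    obtain ⟨-, M, hM, hPM, hQM⟩ := hq
    exact (mem_ncset.mp hQnc).2 M hM ⟨hPM, hQM⟩
  have hRt : R ∉ t := by
    intro hq
    rw [ht, mem_filter] at hq
    obtain ⟨-, M, hM, hPM, hRM⟩ := hq
    exact (mem_ncset.mp hRnc).2 M hM ⟨hPM, hRM⟩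
  have hsub : insert Q (insert R t) ⊆ ℓ := by
    intro x hx
    simp only [mem_insert] at hx
    rcases hx with rfl | rfl | hx
    · exact hQ
    · exact hR
    · exact Finset.mem_of_mem_filter _ hx
  have hcard : (insert Q (insert R t)).card = t.card + 2 := by
    rw [Finset.card_insert_of_notMem, Finset.card_insert_of_notMem hRt]
    simp only [mem_insert, not_or]
    exact ⟨hQR, hQt⟩
  have := Finset.card_le_card hsub
  rw [hcard, (hblocks ℓ hℓ).2] at this
  omega

/-- a partial 2-(n^d, n, 1)-design in which, for every block ℓ and point
P ∉ ℓ, at most (n^d-1)/(n-1) - n blocks through P are disjoint from ℓ, and at most one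
point has valency less than (n^d-1)/(n-1) - 1, can be completed to a full
2-(n^d, n, 1)-design. -/
theorem stmt_1 {α : Type*} [DecidableEq α] (n d : ℕ) (hn : 2 ≤ n) (hd : 2 ≤ d)
    (S : Finset α) (A : Finset (Finset α))
    (hS : S.card = n ^ d)
    (hblocks : ∀ L ∈ A, L ⊆ S ∧ L.card = n)
    (hdesign : ∀ P ∈ S, ∀ Q ∈ S, P ≠ Q → (A.filter (fun L => P ∈ L ∧ Q ∈ L)).card ≤ 1)
    (hpar : ∀ ℓ ∈ A, ∀ P ∈ S, P ∉ ℓ →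
      (A.filter (fun M => P ∈ M ∧ M ∩ ℓ = ∅)).card ≤ (n ^ d - 1) / (n - 1) - n)
    (hone : (S.filter (fun P => valency A P < (n ^ d - 1) / (n - 1) - 1)).card ≤ 1) :
    ∃ A' : Finset (Finset α), A ⊆ A' ∧ (∀ L ∈ A', L ⊆ S ∧ L.card = n) ∧
      ∀ P ∈ S, ∀ Q ∈ S, P ≠ Q → ∃! L, L ∈ A' ∧ P ∈ L ∧ Q ∈ L := by
  classical
  set r := (n ^ d - 1) / (n - 1) with hrdef
  have hrm : (n - 1) * r = n ^ d - 1 := r_mul n d hn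
  have hrn : n + 1 ≤ r := r_ge n d hn hd
  have hcount : ∀ P ∈ S, valency A P * (n - 1) + (ncset S A P).card = n ^ d - 1 := by
    intro P hP
    rw [← hS]
    exact partition_count hblocks hdesign hP
  have hvle : ∀ P ∈ S, valency A P ≤ r := by
    intro P hP
    by_contra h
    push_neg at h
    have h1 := Nat.mul_le_mul_right (n - 1) (show r + 1 ≤ valency A P by omega)
    rw [add_one_mul] at h1
    have h2 : r * (n - 1) = (n - 1) * r := Nat.mul_comm _ _
    have h3 := hcount P hP
    omega
  have hnccard : ∀ P ∈ S, (ncset S A P).card = (r - valency A P) * (n - 1) := by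
    intro P hP
    have h1 := hcount P hP
    have h2 := hvle P hP
    have h3 : (r - valency A P) * (n - 1) = r * (n - 1) - valency A P * (n - 1) :=
      Nat.sub_mul _ _ _
    have h4 : r * (n - 1) = (n - 1) * r := Nat.mul_comm _ _
    omega
  have hsym : ∀ P ∈ S, ∀ Q, Q ∈ ncset S A P → P ∈ ncset S A Q := by
    intro P hP Q hQ
    rw [mem_ncset] at hQ ⊢
    exact ⟨⟨fun h => hQ.1.1 h.symm, hP⟩, fun L hL hc => hQ.2 L hL ⟨hc.2, hc.1⟩⟩
  have hdef : ∀ P ∈ S, (ncset S A P).Nonempty → valency A P + 1 ≤ r := by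
    intro P hP hne
    have h1 := Finset.card_pos.mpr hne
    rw [hnccard P hP] at h1
    have h2 := hvle P hP
    rcases Nat.eq_zero_or_pos (r - valency A P) with h | h
    · rw [h, Nat.zero_mul] at h1; omega
    · omega
  have hXunique : ∀ P ∈ S, ∀ Q ∈ S, valency A P + 1 < r → valency A Q + 1 < r → P = Q := by
    intro P hP Q hQ h1 h2
    apply Finset.card_le_one.mp hone
    · exact Finset.mem_filter.mpr ⟨hP, by omega⟩
    · exact Finset.mem_filter.mpr ⟨hQ, by omega⟩
  have htrans : ∀ P ∈ S, r ≤ valency A P + 1 → ∀ Q R, Q ∈ ncset S A P →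
      R ∈ ncset S A P → Q ≠ R → ∀ L ∈ A, ¬(Q ∈ L ∧ R ∈ L) := by
    intro P hP hv Q R hQ hR hQR L hL hc
    have hPL : P ∉ L := fun h => (mem_ncset.mp hQ).2 L hL ⟨h, hc.1⟩
    exact hQR (meet_bound hn hblocks hdesign hL hP hPL hrn (hpar L hL P hP hPL) hv
      Q hc.1 R hc.2 hQ hR)
  set D1 := S.filter (fun P => valency A P + 1 = r) with hD1
  set Cl := fun P => insert P (ncset S A P) with hCl
  have hclsub : ∀ P ∈ S, Cl P ⊆ S := by
    intro P hP x hx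
    rcases Finset.mem_insert.mp hx with rfl | hx'
    · exact hP
    · exact (mem_ncset.mp hx').1.2
  have hclcard : ∀ P ∈ D1, (Cl P).card = n := by
    intro P hP
    rw [hD1, mem_filter] at hP
    have hPn : P ∉ ncset S A P := fun h => (mem_ncset.mp h).1.1 rfl
    rw [hCl]
    simp only
    rw [Finset.card_insert_of_notMem hPn, hnccard P hP.1]
    have : r - valency A P = 1 := by omega
    rw [this, Nat.one_mul]
    omega
  have hclpair : ∀ P ∈ D1, ∀ Q ∈ Cl P, ∀ R ∈ Cl P, Q ≠ R →
      ∀ L ∈ A, ¬(Q ∈ L ∧ R ∈ L) := by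
    intro P hP Q hQ R hR hQR L hL hc
    rw [hD1, mem_filter] at hP
    rcases Finset.mem_insert.mp hQ with rfl | hQ' <;>
      rcases Finset.mem_insert.mp hR with rfl | hR'
    · exact hQR rfl
    · exact (mem_ncset.mp hR').2 L hL hc
    · exact (mem_ncset.mp hQ').2 L hL ⟨hc.2, hc.1⟩
    · exact htrans P hP.1 (le_of_eq hP.2.symm) Q R hQ' hR' hQR L hL hc
  have hCeq : ∀ P ∈ D1, ∀ Q ∈ D1, Q ∈ ncset S A P → Cl Q = Cl P := by
    intro P hP Q hQ hQP
    have hPS : P ∈ S := (Finset.mem_filter.mp hP).1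
    have hQS : Q ∈ S := (Finset.mem_filter.mp hQ).1
    have hQCl : Q ∈ Cl P := Finset.mem_insert_of_mem hQP
    have h1 : (Cl P).erase Q ⊆ ncset S A Q := by
      intro R hR
      have hRC := Finset.mem_of_mem_erase hR
      have hRQ : R ≠ Q := Finset.ne_of_mem_erase hR
      rcases Finset.mem_insert.mp hRC with rfl | hR'
      · exact hsym R hPS Q hQP
      · rw [mem_ncset]
        refine ⟨⟨hRQ, (mem_ncset.mp hR').1.2⟩, ?_⟩
        intro L hL hc
        exact htrans P hPS (le_of_eq (Finset.mem_filter.mp hP).2.symm) Q R hQP hR'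
          (fun h => hRQ h.symm) L hL ⟨hc.1, hc.2⟩
    have hc1 : ((Cl P).erase Q).card = n - 1 := by
      rw [Finset.card_erase_of_mem hQCl, hclcard P hP]
    have hc2 : (ncset S A Q).card = n - 1 := by
      rw [hnccard Q hQS]
      have := (Finset.mem_filter.mp hQ).2
      have : r - valency A Q = 1 := by omega
      rw [this, Nat.one_mul]
    have h2 : (Cl P).erase Q = ncset S A Q :=
      Finset.eq_of_subset_of_card_le h1 (by omega)
    calc Cl Q = insert Q ((Cl P).erase Q) := by rw [h2]
      _ = Cl P := Finset.insert_erase hQCl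
  set New := D1.image Cl with hNew
  refine ⟨A ∪ New, Finset.subset_union_left, ?_, ?_⟩
  · intro L hL
    rcases Finset.mem_union.mp hL with hLA | hLN
    · exact hblocks L hLA
    · obtain ⟨P, hP, rfl⟩ := Finset.mem_image.mp hLN
      exact ⟨hclsub P (Finset.mem_filter.mp hP).1, hclcard P hP⟩
  · intro P hPS Q hQS hPQ
    by_cases hcol : ∃ L ∈ A, P ∈ L ∧ Q ∈ L
    · obtain ⟨L, hL, hPL, hQL⟩ := hcol
      refine ⟨L, ⟨Finset.mem_union_left _ hL, hPL, hQL⟩, ?_⟩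
      rintro M ⟨hM, hPM, hQM⟩
      rcases Finset.mem_union.mp hM with hMA | hMN
      · apply Finset.card_le_one.mp (hdesign P hPS Q hQS hPQ)
        · exact Finset.mem_filter.mpr ⟨hMA, hPM, hQM⟩
        · exact Finset.mem_filter.mpr ⟨hL, hPL, hQL⟩
      · obtain ⟨R, hR, rfl⟩ := Finset.mem_image.mp hMN
        exact absurd ⟨hPL, hQL⟩ (hclpair R hR P hPM Q hQM hPQ L hL)
    · push_neg at hcol
      have hQnc : Q ∈ ncset S A P := by
        rw [mem_ncset]
        exact ⟨⟨fun h => hPQ h.symm, hQS⟩, fun L hL hc => hcol L hL hc.1 hc.2⟩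
      have hPnc : P ∈ ncset S A Q := hsym P hPS Q hQnc
      have hPd : valency A P + 1 ≤ r := hdef P hPS ⟨Q, hQnc⟩
      have hQd : valency A Q + 1 ≤ r := hdef Q hQS ⟨P, hPnc⟩
      have hD1mem : ∃ T, T ∈ D1 ∧ (T = P ∨ T = Q) := by
        by_cases hP1 : valency A P + 1 = r
        · exact ⟨P, Finset.mem_filter.mpr ⟨hPS, hP1⟩, Or.inl rfl⟩
        · have hQ1 : valency A Q + 1 = r := by
            by_contra hQ1
            exact hPQ (hXunique P hPS Q hQS (by omega) (by omega))
          exact ⟨Q, Finset.mem_filter.mpr ⟨hQS, hQ1⟩, Or.inr rfl⟩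
      obtain ⟨T, hT, hTPQ⟩ := hD1mem
      have hmemCl : ∀ R, R ∈ D1 → (R = P ∨ R = Q) → P ∈ Cl R ∧ Q ∈ Cl R := by
        rintro R hR (rfl | rfl)
        · exact ⟨Finset.mem_insert_self _ _, Finset.mem_insert_of_mem hQnc⟩
        · exact ⟨Finset.mem_insert_of_mem hPnc, Finset.mem_insert_self _ _⟩
      obtain ⟨hPT, hQT⟩ := hmemCl T hT hTPQ
      refine ⟨Cl T, ⟨Finset.mem_union_right _ (Finset.mem_image_of_mem _ hT), hPT, hQT⟩, ?_⟩
      rintro M ⟨hM, hPM, hQM⟩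
      rcases Finset.mem_union.mp hM with hMA | hMN
      · exact absurd ⟨hPM, hQM⟩ (hclpair T hT P hPT Q hQT hPQ M hMA)
      · obtain ⟨R', hR', rfl⟩ := Finset.mem_image.mp hMN
        have hTC : T ∈ Cl T := Finset.mem_insert_self _ _
        have hTC' : T ∈ Cl R' := by rcases hTPQ with rfl | rfl; exacts [hPM, hQM]
        have e2 : Cl T = Cl R' := by
          rcases Finset.mem_insert.mp hTC' with h | h
          · rw [h]
          · exact hCeq R' hR' T hT h
        exact e2.symm
end

section
/- Let n ≥ 2 and let (S, A) be a partial affine plane of order n in which parallelism is an equivalence relation on A. If some point P has valency n + 1, then (S, A) has exactly n + 1 parallel classes. -/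
open Finset

/-- if in a partial affine plane of order n parallelism is an equivalence
relation and some point has valency n + 1, then there are exactly n + 1 parallel
classes. -/
theorem stmt_3 {α : Type*} [DecidableEq α] (n : ℕ) (hn : 2 ≤ n)
    (S : Finset α) (A : Finset (Finset α))
    (hS : S.card = n ^ 2)
    (hlines : ∀ L ∈ A, L ⊆ S ∧ L.card = n)
    (hmeet : ∀ L ∈ A, ∀ M ∈ A, L ≠ M → (L ∩ M).card ≤ 1)
    (hequiv : Equivalence (fun (L M : {x // x ∈ A}) => L.1 = M.1 ∨ L.1 ∩ M.1 = ∅))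
    (P : α) (hP : P ∈ S) (hval : valency A P = n + 1) :
    (A.image (fun L => A.filter (fun M => L = M ∨ L ∩ M = ∅))).card = n + 1 := by
  classical
  have hTcard : (A.filter (fun L => P ∈ L)).card = n + 1 := hval
  set T := A.filter (fun L => P ∈ L) with hT
  set f : Finset α → Finset (Finset α) := fun L => A.filter (fun M => L = M ∨ L ∩ M = ∅) with hf
  -- classes of parallel lines coincide
  have hclass : ∀ L, L ∈ A → ∀ L', L' ∈ A → (L = L' ∨ L ∩ L' = ∅) → f L = f L' := by
    intro L hL L' hL' hp
    have hsym : L' = L ∨ L' ∩ L = ∅ :=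
      hequiv.symm (x := (⟨L, hL⟩ : {x // x ∈ A})) (y := ⟨L', hL'⟩) hp
    ext M
    simp only [f, mem_filter, and_congr_right_iff]
    intro hM
    constructor
    · intro h
      exact hequiv.trans (x := (⟨L', hL'⟩ : {x // x ∈ A})) (y := ⟨L, hL⟩) (z := ⟨M, hM⟩) hsym h
    · intro h
      exact hequiv.trans (x := (⟨L, hL⟩ : {x // x ∈ A})) (y := ⟨L', hL'⟩) (z := ⟨M, hM⟩) hp h
  -- every line is parallel to some line through P
  have hexists : ∀ L ∈ A, ∃ L' ∈ T, (L = L' ∨ L ∩ L' = ∅) := by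
    intro L hL
    by_cases hPL : P ∈ L
    · exact ⟨L, mem_filter.mpr ⟨hL, hPL⟩, Or.inl rfl⟩
    by_contra hcon
    push_neg at hcon
    have hne : ∀ L' ∈ T, (L ∩ L').Nonempty := by
      intro L' hL'
      rcases Finset.eq_empty_or_nonempty (L ∩ L') with h | h
      · exact absurd h (hcon L' hL').2.ne_empty
      · exact h
    choose g hg using fun (L' : Finset α) (h : L' ∈ T) => hne L' h
    have hinj : ∀ L₁, ∀ h₁ : L₁ ∈ T, ∀ L₂, ∀ h₂ : L₂ ∈ T, g L₁ h₁ = g L₂ h₂ → L₁ = L₂ := by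
      intro L₁ h₁ L₂ h₂ heq
      by_contra hne12
      have hA₁ := (mem_filter.mp h₁).1
      have hA₂ := (mem_filter.mp h₂).1
      have hP₁ := (mem_filter.mp h₁).2
      have hP₂ := (mem_filter.mp h₂).2
      have hQ₁ := hg L₁ h₁
      have hQ₂ := hg L₂ h₂
      have hQL : g L₁ h₁ ∈ L := (mem_inter.mp hQ₁).1
      have hQ1' : g L₁ h₁ ∈ L₁ := (mem_inter.mp hQ₁).2
      have hQ2' : g L₁ h₁ ∈ L₂ := by
        rw [heq]; exact (mem_inter.mp hQ₂).2
      have hQP : g L₁ h₁ ≠ P := fun h => hPL (h ▸ hQL)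
      have hsub : ({g L₁ h₁, P} : Finset α) ⊆ L₁ ∩ L₂ := by
        intro x hx
        simp only [mem_insert, mem_singleton] at hx
        rcases hx with rfl | rfl
        · exact mem_inter.mpr ⟨hQ1', hQ2'⟩
        · exact mem_inter.mpr ⟨hP₁, hP₂⟩
      have h2 : 2 ≤ (L₁ ∩ L₂).card := by
        calc 2 = ({g L₁ h₁, P} : Finset α).card := (Finset.card_pair hQP).symm
        _ ≤ _ := Finset.card_le_card hsub
      have := hmeet L₁ hA₁ L₂ hA₂ hne12
      omega
    have hmap : T.card ≤ L.card := by
      have hcardim : (T.attach.image (fun x => g x.1 x.2)).card = T.card := by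
        rw [Finset.card_image_of_injOn, Finset.card_attach]
        intro x _ y _ h
        exact Subtype.ext (hinj x.1 x.2 y.1 y.2 h)
      calc T.card = _ := hcardim.symm
        _ ≤ L.card := Finset.card_le_card (by
          intro x hx
          simp only [mem_image, mem_attach, true_and] at hx
          obtain ⟨y, hy⟩ := hx
          exact hy ▸ (mem_inter.mp (hg y.1 y.2)).1)
    have := (hlines L hL).2
    omega
  -- conclude
  have himg : A.image f = T.image f := by
    apply Finset.Subset.antisymm
    · intro c hc
      obtain ⟨L, hL, rfl⟩ := mem_image.mp hc
      obtain ⟨L', hL', hp⟩ := hexists L hL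
      exact mem_image.mpr ⟨L', hL', (hclass L hL L' (mem_filter.mp hL').1 hp).symm⟩
    · exact Finset.image_subset_image (Finset.filter_subset _ _)
  rw [himg, ← hTcard]
  apply Finset.card_image_of_injOn
  intro L₁ h₁ L₂ h₂ heq
  have hA₂ := (mem_filter.mp h₂).1
  have hmem : L₂ ∈ f L₂ := mem_filter.mpr ⟨hA₂, Or.inl rfl⟩
  rw [← heq] at hmem
  rcases (mem_filter.mp hmem).2 with h | h
  · exact h
  · exfalso
    have hPm : P ∈ L₁ ∩ L₂ := mem_inter.mpr ⟨(mem_filter.mp h₁).2, (mem_filter.mp h₂).2⟩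
    rw [h] at hPm
    exact absurd hPm (Finset.notMem_empty P)
end

section
/- Let (S, A) be a partial affine plane of order n (n ≥ 2) with b lines. If b ≥ n² and parallelism is an equivalence relation on A, then (S, A) can be completed to an affine plane of order n. -/
open Finset

namespace PAP5

variable {α : Type*} [DecidableEq α]

def par (L M : Finset α) : Prop := L = M ∨ L ∩ M = ∅

instance (L M : Finset α) : Decidable (par L M) := by unfold par; infer_instance

lemma par_refl (L : Finset α) : par L L := Or.inl rfl

lemma par_symm {L M : Finset α} (h : par L M) : par M L := by
  rcases h with h | h
  · exact Or.inl h.symm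
  · exact Or.inr (by rwa [inter_comm])

lemma not_par_nonempty {L M : Finset α} (h : ¬ par L M) : (L ∩ M).Nonempty := by
  rw [par, not_or] at h
  exact nonempty_iff_ne_empty.2 h.2

lemma par_disjoint {L M : Finset α} (h : par L M) (hne : L ≠ M) : L ∩ M = ∅ := by
  rcases h with h | h
  · exact absurd h hne
  · exact h

/-- the meeting point of two lines (junk value `j` if disjoint) -/
noncomputable def mpt (L M : Finset α) (j : α) : α := if h : (L ∩ M).Nonempty then h.choose else j

lemma mpt_mem {L M : Finset α} (h : (L ∩ M).Nonempty) (j : α) : mpt L M j ∈ L ∩ M := by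
  rw [mpt, dif_pos h]; exact h.choose_spec

/-- context: a partial affine plane of order n with ≥ n² lines, parallelism transitive -/
structure Ctx (n : ℕ) (S : Finset α) (A : Finset (Finset α)) : Prop where
  hn : 2 ≤ n
  hS : S.card = n ^ 2
  sub : ∀ L ∈ A, L ⊆ S
  cardl : ∀ L ∈ A, L.card = n
  meet : ∀ L ∈ A, ∀ M ∈ A, L ≠ M → (L ∩ M).card ≤ 1
  ptrans : ∀ L ∈ A, ∀ M ∈ A, ∀ K ∈ A, par L M → par M K → par L K
  big : n ^ 2 ≤ A.card

/-- lines through a point -/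
def pencil (A : Finset (Finset α)) (P : α) : Finset (Finset α) := A.filter (fun L => P ∈ L)

/-- points not joined to P (in S) -/
def us (S : Finset α) (A : Finset (Finset α)) (P : α) : Finset α :=
  S.filter (fun Q => ∀ L ∈ A, P ∈ L → Q ∉ L)

/-- the parallel class of a line -/
def cls (A : Finset (Finset α)) (M : Finset α) : Finset (Finset α) := A.filter (fun L => par M L)

/-- points not covered by the parallel class of M -/
def ucls (S : Finset α) (A : Finset (Finset α)) (M : Finset α) : Finset α :=
  S.filter (fun Y => ∀ L ∈ A, par M L → Y ∉ L)

variable {n : ℕ} {S : Finset α} {A : Finset (Finset α)}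

lemma two_of_line (C : Ctx n S A) {L M : Finset α} (hL : L ∈ A) (hM : M ∈ A)
    {P Q : α} (hPL : P ∈ L) (hPM : P ∈ M) (hQL : Q ∈ L) (hQM : Q ∈ M) (hPQ : P ≠ Q) :
    L = M := by
  by_contra hne
  have h := C.meet L hL M hM hne
  have h2 : ({P, Q} : Finset α) ⊆ L ∩ M := by
    intro x hx
    simp only [mem_insert, mem_singleton] at hx
    rcases hx with rfl | rfl <;> simp [mem_inter, *]
  have := card_le_card h2
  rw [card_insert_of_notMem (by simpa using hPQ), card_singleton] at this
  omega

lemma mem_pencil {P : α} {L : Finset α} : L ∈ pencil A P ↔ L ∈ A ∧ P ∈ L := by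
  simp [pencil]

/-- two distinct lines through P intersect exactly in {P} -/
lemma pencil_inter (C : Ctx n S A) {P : α} {L₁ L₂ : Finset α}
    (h1 : L₁ ∈ pencil A P) (h2 : L₂ ∈ pencil A P) (hne : L₁ ≠ L₂) : L₁ ∩ L₂ = {P} := by
  rw [mem_pencil] at h1 h2
  have hP : P ∈ L₁ ∩ L₂ := mem_inter.2 ⟨h1.2, h2.2⟩
  have hc := C.meet L₁ h1.1 L₂ h2.1 hne
  have : (L₁ ∩ L₂).card = 1 := le_antisymm hc (card_pos.2 ⟨P, hP⟩)
  rw [card_eq_one] at this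
  obtain ⟨a, ha⟩ := this
  rw [ha] at hP ⊢
  simp only [mem_singleton] at hP
  rw [hP]

/-- key counting device: a pencil-like family T through P, none parallel to Mo,
    marks exactly T.card points on Mo. -/
lemma meet_count (C : Ctx n S A) {P : α} {Mo : Finset α} (hMo : Mo ∈ A) (hPMo : P ∉ Mo)
    {T : Finset (Finset α)} (hTp : T ⊆ pencil A P) (hT : ∀ L ∈ T, ¬ par L Mo) :
    (Mo.filter (fun X => ∃ L ∈ T, X ∈ L)).card = T.card := by
  have hmem : ∀ L ∈ T, mpt L Mo P ∈ L ∩ Mo := fun L hL =>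
    mpt_mem (not_par_nonempty (hT L hL)) P
  have himg : image (fun L => mpt L Mo P) T = Mo.filter (fun X => ∃ L ∈ T, X ∈ L) := by
    apply Finset.ext
    intro X
    simp only [mem_image, mem_filter]
    constructor
    · rintro ⟨L, hL, rfl⟩
      have := hmem L hL
      rw [mem_inter] at this
      exact ⟨this.2, L, hL, this.1⟩
    · rintro ⟨hXMo, L, hL, hXL⟩
      refine ⟨L, hL, ?_⟩
      have h1 := hmem L hL
      have hLA : L ∈ A := (mem_pencil.1 (hTp hL)).1
      have hLne : L ≠ Mo := by rintro rfl; exact hPMo (mem_pencil.1 (hTp hL)).2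
      have hc := C.meet L hLA Mo hMo hLne
      rw [card_le_one] at hc
      exact hc _ h1 _ (mem_inter.2 ⟨hXL, hXMo⟩)
  rw [← himg]
  apply card_image_of_injOn
  intro L₁ h1 L₂ h2 heq
  by_contra hne
  have hi := pencil_inter C (hTp h1) (hTp h2) hne
  have heq' : mpt L₁ Mo P = mpt L₂ Mo P := heq
  have hx : mpt L₁ Mo P ∈ L₁ ∩ L₂ := by
    rw [mem_inter]
    refine ⟨(mem_inter.1 (hmem L₁ h1)).1, ?_⟩
    rw [heq']; exact (mem_inter.1 (hmem L₂ h2)).1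
  rw [hi, mem_singleton] at hx
  exact hPMo (hx ▸ (mem_inter.1 (hmem L₁ h1)).2)

/-- a point missed by the class of Mo is on at most n lines -/
lemma missed_rle (C : Ctx n S A) {Y : α} {Mo : Finset α} (hMo : Mo ∈ A)
    (hmiss : ∀ L ∈ A, par Mo L → Y ∉ L) : (pencil A Y).card ≤ n := by
  have hYMo : Y ∉ Mo := hmiss Mo hMo (par_refl Mo)
  have hT : ∀ L ∈ pencil A Y, ¬ par L Mo := by
    intro L hL hp
    rw [mem_pencil] at hL
    exact hmiss L hL.1 (par_symm hp) hL.2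
  have := meet_count C hMo hYMo (Finset.Subset.refl _) hT
  calc (pencil A Y).card = _ := this.symm
    _ ≤ Mo.card := card_filter_le _ _
    _ = n := C.cardl Mo hMo

/-- every point is on at most n+1 lines -/
lemma pencil_le (C : Ctx n S A) {Y : α} (hY : Y ∈ S) : (pencil A Y).card ≤ n + 1 := by
  have hdisj : ∀ L₁ ∈ pencil A Y, ∀ L₂ ∈ pencil A Y, L₁ ≠ L₂ →
      Disjoint (L₁.erase Y) (L₂.erase Y) := by
    intro L₁ h1 L₂ h2 hne
    rw [disjoint_left]
    intro x hx1 hx2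
    have : x ∈ L₁ ∩ L₂ := mem_inter.2 ⟨mem_of_mem_erase hx1, mem_of_mem_erase hx2⟩
    rw [pencil_inter C h1 h2 hne, mem_singleton] at this
    exact (mem_erase.1 hx1).1 this
  have hsub : (pencil A Y).biUnion (fun L => L.erase Y) ⊆ S.erase Y := by
    intro x hx
    rw [mem_biUnion] at hx
    obtain ⟨L, hL, hxL⟩ := hx
    rw [mem_pencil] at hL
    exact mem_erase.2 ⟨(mem_erase.1 hxL).1, C.sub L hL.1 (mem_of_mem_erase hxL)⟩
  have hcard := card_le_card hsub
  rw [card_biUnion hdisj] at hcard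
  have hsum : ∑ L ∈ pencil A Y, (L.erase Y).card = (pencil A Y).card * (n - 1) := by
    rw [Finset.sum_congr rfl (fun L hL => ?_), Finset.sum_const, smul_eq_mul]
    rw [mem_pencil] at hL
    rw [card_erase_of_mem hL.2, C.cardl L hL.1]
  rw [hsum, card_erase_of_mem hY, C.hS] at hcard
  have hn2 : 2 ≤ n := C.hn
  obtain ⟨m, rfl⟩ : ∃ m, n = m + 1 := ⟨n - 1, by omega⟩
  have hm : 1 ≤ m := by omega
  have he : (m + 1) ^ 2 - 1 = m ^ 2 + 2 * m := by
    have : (m + 1) ^ 2 = m ^ 2 + 2 * m + 1 := by ring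
    omega
  rw [he] at hcard
  simp only [Nat.add_sub_cancel] at hcard
  by_contra hcon
  push_neg at hcon
  nlinarith




/-- at most one line of the pencil at P is parallel to a given line -/
lemma at_most_one_par (C : Ctx n S A) (P : α) {L₀ : Finset α} (hL₀ : L₀ ∈ A) :
    ((pencil A P).filter (fun L => par L L₀)).card ≤ 1 := by
  rw [card_le_one]
  intro L₁ h1 L₂ h2
  rw [mem_filter] at h1 h2
  by_contra hne
  have hp : par L₁ L₂ := by
    have m1 : L₁ ∈ A := (mem_pencil.1 h1.1).1
    have m2 : L₂ ∈ A := (mem_pencil.1 h2.1).1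
    exact C.ptrans L₁ m1 L₀ hL₀ L₂ m2 h1.2 (par_symm h2.2)
  have := par_disjoint hp hne
  rw [pencil_inter C h1.1 h2.1 hne] at this
  simp at this

/-- partition of S by a point: n² = 1 + r(n-1) + |us P| -/
lemma us_card (C : Ctx n S A) {P : α} (hP : P ∈ S) (hr : 1 ≤ (pencil A P).card) :
    (us S A P).card + (pencil A P).card * (n - 1) + 1 = n ^ 2 := by
  obtain ⟨L₀, hL₀⟩ := card_pos.1 hr
  have hPus : P ∉ us S A P := by
    rw [us, mem_filter]
    rw [mem_pencil] at hL₀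
    push_neg
    intro _
    exact ⟨L₀, hL₀.1, hL₀.2, hL₀.2⟩
  -- S.erase P = us ∪ biUnion (pencil) (erase P), disjointly
  have husub : us S A P ⊆ S.erase P := by
    intro x hx
    rw [us, mem_filter] at hx
    refine mem_erase.2 ⟨?_, hx.1⟩
    rintro rfl; exact hPus (by rw [us, mem_filter]; exact hx)
  have hbsub : (pencil A P).biUnion (fun L => L.erase P) ⊆ S.erase P := by
    intro x hx
    rw [mem_biUnion] at hx
    obtain ⟨L, hL, hxL⟩ := hx
    rw [mem_pencil] at hL
    exact mem_erase.2 ⟨(mem_erase.1 hxL).1, C.sub L hL.1 (mem_of_mem_erase hxL)⟩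
  have hcover : S.erase P = us S A P ∪ (pencil A P).biUnion (fun L => L.erase P) := by
    apply Finset.ext
    intro x
    constructor
    · intro hx
      rw [mem_union]
      by_cases hxu : x ∈ us S A P
      · exact Or.inl hxu
      · right
        rw [us, mem_filter] at hxu
        push_neg at hxu
        obtain ⟨L, hLA, hPL, hxL⟩ := hxu (mem_of_mem_erase hx)
        rw [mem_biUnion]
        exact ⟨L, mem_pencil.2 ⟨hLA, hPL⟩, mem_erase.2 ⟨(mem_erase.1 hx).1, hxL⟩⟩
    · intro hx
      rcases mem_union.1 hx with h | h
      · exact husub h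
      · exact hbsub h
  have hdisj : Disjoint (us S A P) ((pencil A P).biUnion (fun L => L.erase P)) := by
    rw [disjoint_left]
    intro x hxu hxb
    rw [mem_biUnion] at hxb
    obtain ⟨L, hL, hxL⟩ := hxb
    rw [mem_pencil] at hL
    rw [us, mem_filter] at hxu
    exact hxu.2 L hL.1 hL.2 (mem_of_mem_erase hxL)
  have hdisj2 : ∀ L₁ ∈ pencil A P, ∀ L₂ ∈ pencil A P, L₁ ≠ L₂ →
      Disjoint (L₁.erase P) (L₂.erase P) := by
    intro L₁ h1 L₂ h2 hne
    rw [disjoint_left]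
    intro x hx1 hx2
    have : x ∈ L₁ ∩ L₂ := mem_inter.2 ⟨mem_of_mem_erase hx1, mem_of_mem_erase hx2⟩
    rw [pencil_inter C h1 h2 hne, mem_singleton] at this
    exact (mem_erase.1 hx1).1 this
  have hbcard : ((pencil A P).biUnion (fun L => L.erase P)).card
      = (pencil A P).card * (n - 1) := by
    rw [card_biUnion hdisj2]
    rw [Finset.sum_congr rfl (fun L hL => ?_), Finset.sum_const, smul_eq_mul]
    rw [mem_pencil] at hL
    rw [card_erase_of_mem hL.2, C.cardl L hL.1]
  have := card_union_of_disjoint hdisj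
  rw [← hcover, card_erase_of_mem hP, C.hS, hbcard] at this
  have hn2 : 2 ≤ n := C.hn
  have hnn : 1 ≤ n ^ 2 := by nlinarith
  omega

/-- members of `us P` are pairwise unjoined (when P is on n lines) -/
lemma us_clique (C : Ctx n S A) {P : α} (hP : P ∈ S) (hr : (pencil A P).card = n)
    {Q Q' : α} (hQ : Q ∈ us S A P) (hQ' : Q' ∈ us S A P) (hne : Q ≠ Q')
    {L₀ : Finset α} (hL₀ : L₀ ∈ A) : ¬ (Q ∈ L₀ ∧ Q' ∈ L₀) := by
  rintro ⟨hQL, hQ'L⟩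
  rw [us, mem_filter] at hQ hQ'
  have hPL₀ : P ∉ L₀ := fun h => hQ.2 L₀ hL₀ h hQL
  have key := card_filter_add_card_filter_not (s := pencil A P) (p := fun L => par L L₀)
  rw [hr] at key
  have h1 := at_most_one_par C P hL₀
  have hmc := meet_count C (T := (pencil A P).filter (fun a => ¬ par a L₀)) hL₀ hPL₀
    (filter_subset _ _) (fun L hL => (mem_filter.1 hL).2)
  have hsub : L₀.filter (fun X => ∃ L ∈ (pencil A P).filter (fun a => ¬ par a L₀), X ∈ L)
      ⊆ (L₀.erase Q).erase Q' := by
    intro X hX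
    rw [mem_filter] at hX
    obtain ⟨hXL₀, L, hLT, hXL⟩ := hX
    have hLp := mem_pencil.1 (mem_filter.1 hLT).1
    refine mem_erase.2 ⟨?_, mem_erase.2 ⟨?_, hXL₀⟩⟩
    · rintro rfl; exact hQ'.2 L hLp.1 hLp.2 hXL
    · rintro rfl; exact hQ.2 L hLp.1 hLp.2 hXL
  have hle := card_le_card hsub
  rw [hmc] at hle
  have e1 : ((L₀.erase Q).erase Q').card = (L₀.erase Q).card - 1 :=
    card_erase_of_mem (mem_erase.2 ⟨hne.symm, hQ'L⟩)
  rw [e1, card_erase_of_mem hQL, C.cardl L₀ hL₀] at hle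
  have hn2 : 2 ≤ n := C.hn
  omega

/-- if some line through P is parallel to M' (and P ∉ M'), then M' contains a point
    unjoined to P -/
lemma missing_point (C : Ctx n S A) {P : α} (hP : P ∈ S) (hr : (pencil A P).card = n)
    {M' : Finset α} (hM' : M' ∈ A) (hPM' : P ∉ M')
    {m : Finset α} (hm : m ∈ A) (hPm : P ∈ m) (hpar : par M' m) :
    ∃ X ∈ M', X ∈ us S A P := by
  have hmne : m ≠ M' := fun h => hPM' (h ▸ hPm)
  have hdisj : m ∩ M' = ∅ := par_disjoint (par_symm hpar) hmne
  set T := (pencil A P).erase m with hTdef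
  have hTsub : T ⊆ pencil A P := erase_subset _ _
  have hT : ∀ L ∈ T, ¬ par L M' := by
    intro L hL hp
    have hLp := mem_pencil.1 (hTsub hL)
    have : par L m := C.ptrans L hLp.1 M' hM' m hm hp hpar
    rcases this with h | h
    · exact (mem_erase.1 hL).1 h
    · have : P ∈ L ∩ m := mem_inter.2 ⟨hLp.2, hPm⟩
      rw [h] at this; simp at this
  have hmc := meet_count C hM' hPM' hTsub hT
  have hTcard : T.card = n - 1 := by
    rw [hTdef, card_erase_of_mem (mem_pencil.2 ⟨hm, hPm⟩), hr]
  have hsub : M'.filter (fun X => ∃ L ∈ T, X ∈ L) ⊆ M' := filter_subset _ _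
  have hlt : (M'.filter (fun X => ∃ L ∈ T, X ∈ L)).card < M'.card := by
    rw [hmc, hTcard, C.cardl M' hM']
    have := C.hn; omega
  obtain ⟨X, hXM', hXf⟩ := exists_of_ssubset (ssubset_of_subset_of_ne hsub (by
    intro h; rw [h] at hlt; exact lt_irrefl _ hlt))
  refine ⟨X, hXM', ?_⟩
  rw [us, mem_filter]
  refine ⟨C.sub M' hM' hXM', ?_⟩
  intro L hLA hPL hXL
  by_cases hLm : L = m
  · have : X ∈ m ∩ M' := mem_inter.2 ⟨hLm ▸ hXL, hXM'⟩
    rw [hdisj] at this; simp at this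
  · exact hXf (mem_filter.2 ⟨hXM', L, mem_erase.2 ⟨hLm, mem_pencil.2 ⟨hLA, hPL⟩⟩, hXL⟩)

/-- if no line through P is parallel to M₂ and P is on n lines, every point of M₂ is
    joined to P -/
lemma covered_line (C : Ctx n S A) {P : α} (hr : (pencil A P).card = n)
    {M₂ : Finset α} (hM₂ : M₂ ∈ A) (hPM₂ : P ∉ M₂)
    (hT : ∀ L ∈ pencil A P, ¬ par L M₂) :
    ∀ X ∈ M₂, ∃ L ∈ A, P ∈ L ∧ X ∈ L := by
  have hmc := meet_count C hM₂ hPM₂ (Finset.Subset.refl _) hT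
  have heq : M₂.filter (fun X => ∃ L ∈ pencil A P, X ∈ L) = M₂ := by
    apply eq_of_subset_of_card_le (filter_subset _ _)
    rw [hmc, hr, C.cardl M₂ hM₂]
  intro X hX
  have : X ∈ M₂.filter (fun X => ∃ L ∈ pencil A P, X ∈ L) := heq.symm ▸ hX
  rw [mem_filter] at this
  obtain ⟨_, L, hL, hXL⟩ := this
  rw [mem_pencil] at hL
  exact ⟨L, hL.1, hL.2, hXL⟩

/-- total incidences: ∑_{Y ∈ S} r_Y = |A| * n -/
lemma sum_pencil (C : Ctx n S A) : ∑ Y ∈ S, (pencil A Y).card = A.card * n := by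
  have h1 : ∀ Y, (pencil A Y).card = ∑ L ∈ A, if Y ∈ L then 1 else 0 := by
    intro Y; rw [pencil, card_filter]
  rw [Finset.sum_congr rfl (fun Y _ => h1 Y), Finset.sum_comm]
  rw [Finset.sum_congr rfl (fun L hL => ?_), Finset.sum_const, smul_eq_mul]
  have : ∑ Y ∈ S, (if Y ∈ L then 1 else 0) = (S.filter (fun Y => Y ∈ L)).card :=
    (card_filter _ _).symm
  rw [this]
  have : S.filter (fun Y => Y ∈ L) = L := by
    apply Finset.ext
    intro x
    rw [mem_filter]
    exact ⟨fun h => h.2, fun h => ⟨C.sub L hL h, h⟩⟩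
  rw [this, C.cardl L hL]

/-- double counting a relation between two finsets -/
lemma swap_count (U V : Finset α) (R : α → α → Prop) [∀ x y, Decidable (R x y)] :
    ∑ x ∈ U, (V.filter (fun y => R x y)).card
      = ∑ y ∈ V, (U.filter (fun x => R x y)).card := by
  have h1 : ∀ x, (V.filter (fun y => R x y)).card = ∑ y ∈ V, if R x y then 1 else 0 :=
    fun x => card_filter _ _
  have h2 : ∀ y, (U.filter (fun x => R x y)).card = ∑ x ∈ U, if R x y then 1 else 0 :=
    fun y => card_filter _ _
  rw [Finset.sum_congr rfl (fun x _ => h1 x), Finset.sum_congr rfl (fun y _ => h2 y),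
    Finset.sum_comm]


lemma mem_cls_self {M : Finset α} (hM : M ∈ A) : M ∈ cls A M :=
  mem_filter.2 ⟨hM, par_refl M⟩

lemma cls_mem_A {M L : Finset α} (hL : L ∈ cls A M) : L ∈ A := (mem_filter.1 hL).1

lemma cls_closed (C : Ctx n S A) {M L L' : Finset α} (hM : M ∈ A) (hL : L ∈ cls A M)
    (hL' : L' ∈ A) (hp : par L L') : L' ∈ cls A M := by
  rw [cls, mem_filter] at hL ⊢
  exact ⟨hL', C.ptrans M hM L hL.1 L' hL' hL.2 hp⟩

lemma cls_par (C : Ctx n S A) {M L L' : Finset α} (hM : M ∈ A) (h1 : L ∈ cls A M)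
    (h2 : L' ∈ cls A M) : par L L' := by
  rw [cls, mem_filter] at h1 h2
  exact C.ptrans L h1.1 M hM L' h2.1 (par_symm h1.2) h2.2

lemma cls_unique_through (C : Ctx n S A) {M M₁ M₂ : Finset α} {X : α} (hM : M ∈ A)
    (h1 : M₁ ∈ cls A M) (h2 : M₂ ∈ cls A M) (hX1 : X ∈ M₁) (hX2 : X ∈ M₂) : M₁ = M₂ := by
  by_contra hne
  have hd := par_disjoint (cls_par C hM h1 h2) hne
  have : X ∈ M₁ ∩ M₂ := mem_inter.2 ⟨hX1, hX2⟩
  rw [hd] at this; simp at this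

lemma not_par_of_not_mem_cls (C : Ctx n S A) {M L M₂ : Finset α} (hM : M ∈ A)
    (hL : L ∈ A) (hnL : L ∉ cls A M) (h2 : M₂ ∈ cls A M) : ¬ par M₂ L :=
  fun hp => hnL (cls_closed C hM h2 hL hp)

lemma ucls_not_mem {M : Finset α} {Y : α} (hY : Y ∈ ucls S A M) {M₂ : Finset α}
    (h2 : M₂ ∈ cls A M) : Y ∉ M₂ := by
  rw [ucls, mem_filter] at hY
  rw [cls, mem_filter] at h2
  exact hY.2 M₂ h2.1 h2.2

/-- partition of S into the points covered by the class of M and `ucls` -/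
lemma ucls_card (C : Ctx n S A) {M : Finset α} (hM : M ∈ A) :
    (ucls S A M).card + (cls A M).card * n = n ^ 2 := by
  have hdisj2 : ∀ M₁ ∈ cls A M, ∀ M₂ ∈ cls A M, M₁ ≠ M₂ → Disjoint M₁ M₂ := by
    intro M₁ h1 M₂ h2 hne
    rw [disjoint_iff_inter_eq_empty]
    exact par_disjoint (cls_par C hM h1 h2) hne
  have hbsub : (cls A M).biUnion (fun L => L) ⊆ S := by
    intro x hx
    rw [mem_biUnion] at hx
    obtain ⟨L, hL, hxL⟩ := hx
    exact C.sub L (cls_mem_A hL) hxL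
  have hcover : S = ucls S A M ∪ (cls A M).biUnion (fun L => L) := by
    apply Finset.ext
    intro x
    constructor
    · intro hx
      rw [mem_union]
      by_cases hxu : x ∈ ucls S A M
      · exact Or.inl hxu
      · right
        rw [ucls, mem_filter] at hxu
        push_neg at hxu
        obtain ⟨L, hLA, hpar, hxL⟩ := hxu hx
        rw [mem_biUnion]
        exact ⟨L, mem_filter.2 ⟨hLA, hpar⟩, hxL⟩
    · intro hx
      rcases mem_union.1 hx with h | h
      · exact mem_of_mem_filter _ h
      · exact hbsub h
  have hdisj : Disjoint (ucls S A M) ((cls A M).biUnion (fun L => L)) := by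
    rw [disjoint_left]
    intro x hxu hxb
    rw [mem_biUnion] at hxb
    obtain ⟨L, hL, hxL⟩ := hxb
    exact ucls_not_mem hxu hL hxL
  have hbcard : ((cls A M).biUnion (fun L => L)).card = (cls A M).card * n := by
    rw [card_biUnion hdisj2]
    rw [Finset.sum_congr rfl (fun L hL => C.cardl L (cls_mem_A hL)), Finset.sum_const,
      smul_eq_mul]
  have := card_union_of_disjoint hdisj
  rw [← hcover, C.hS, hbcard] at this
  omega

/-- every line not in the class of M meets `ucls M` in exactly n - k points -/
lemma line_trans (C : Ctx n S A) {M L : Finset α} (hM : M ∈ A) (hL : L ∈ A)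
    (hnL : L ∉ cls A M) :
    (L.filter (fun Y => Y ∈ ucls S A M)).card + (cls A M).card = n := by
  have hLne : L.Nonempty := card_pos.1 (by rw [C.cardl L hL]; have := C.hn; omega)
  set j := hLne.choose with hj
  have hmem : ∀ M₂ ∈ cls A M, mpt M₂ L j ∈ M₂ ∩ L := by
    intro M₂ h2
    exact mpt_mem (not_par_nonempty (not_par_of_not_mem_cls C hM hL hnL h2)) j
  have himg : image (fun M₂ => mpt M₂ L j) (cls A M) = L.filter (fun Y => ¬ Y ∈ ucls S A M) := by
    apply Finset.ext
    intro Y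
    simp only [mem_image, mem_filter]
    constructor
    · rintro ⟨M₂, h2, rfl⟩
      have := mem_inter.1 (hmem M₂ h2)
      exact ⟨this.2, fun hY => ucls_not_mem hY h2 this.1⟩
    · rintro ⟨hYL, hYu⟩
      have hYS : Y ∈ S := C.sub L hL hYL
      rw [ucls, mem_filter] at hYu
      push_neg at hYu
      obtain ⟨M₂, h2A, h2p, hYM₂⟩ := hYu hYS
      have h2 : M₂ ∈ cls A M := mem_filter.2 ⟨h2A, h2p⟩
      refine ⟨M₂, h2, ?_⟩
      have h1 := hmem M₂ h2
      have hne : M₂ ≠ L := fun h => hnL (h ▸ h2)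
      have hc := C.meet M₂ (cls_mem_A h2) L hL hne
      rw [card_le_one] at hc
      exact hc _ h1 _ (mem_inter.2 ⟨hYM₂, hYL⟩)
  have hinj : Set.InjOn (fun M₂ => mpt M₂ L j) ↑(cls A M) := by
    intro M₁ h1 M₂ h2 heq
    have heq' : mpt M₁ L j = mpt M₂ L j := heq
    exact cls_unique_through C hM h1 h2 (mem_inter.1 (hmem M₁ h1)).1
      (heq' ▸ (mem_inter.1 (hmem M₂ h2)).1)
  have hcard : (L.filter (fun Y => ¬ Y ∈ ucls S A M)).card = (cls A M).card := by
    rw [← himg]; exact card_image_of_injOn hinj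
  have := card_filter_add_card_filter_not (s := L) (p := fun Y => Y ∈ ucls S A M)
  rw [C.cardl L hL] at this
  omega

/-- a point of `ucls M` is joined to exactly r_P points of each line of the class -/
lemma point_line_count (C : Ctx n S A) {M : Finset α} (hM : M ∈ A) {P : α}
    (hP : P ∈ ucls S A M) {M₂ : Finset α} (h2 : M₂ ∈ cls A M) :
    (M₂.filter (fun X => ∃ L ∈ A, P ∈ L ∧ X ∈ L)).card = (pencil A P).card := by
  have hPM₂ : P ∉ M₂ := ucls_not_mem hP h2
  have hT : ∀ L ∈ pencil A P, ¬ par L M₂ := by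
    intro L hL hp
    rw [mem_pencil] at hL
    exact ucls_not_mem hP (cls_closed C hM h2 hL.1 (par_symm hp)) hL.2
  have hmc := meet_count C (cls_mem_A h2) hPM₂ (Finset.Subset.refl _) hT
  rw [← hmc]
  apply congrArg
  apply Finset.ext
  intro X
  simp only [mem_filter, mem_pencil]
  constructor
  · rintro ⟨hXM₂, L, hLA, hPL, hXL⟩
    exact ⟨hXM₂, L, ⟨hLA, hPL⟩, hXL⟩
  · rintro ⟨hXM₂, L, ⟨hLA, hPL⟩, hXL⟩
    exact ⟨hXM₂, L, hLA, hPL, hXL⟩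

/-- a point X on a line M₂ of the class of M is joined to exactly (r_X - 1)·d points
    of ucls M -/
lemma ucls_line_count (C : Ctx n S A) {M M₂ : Finset α} (hM : M ∈ A) (h2 : M₂ ∈ cls A M)
    {X : α} (hX : X ∈ M₂) {dd : ℕ} (hdd : (cls A M).card + dd = n) :
    ((ucls S A M).filter (fun P => ∃ L ∈ A, P ∈ L ∧ X ∈ L)).card
      = ((pencil A X).erase M₂).card * dd := by
  have hXu : X ∉ ucls S A M := fun h => ucls_not_mem h h2 hX
  have hbeq : (ucls S A M).filter (fun P => ∃ L ∈ A, P ∈ L ∧ X ∈ L)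
      = ((pencil A X).erase M₂).biUnion (fun L => L.filter (fun Y => Y ∈ ucls S A M)) := by
    apply Finset.ext
    intro P
    constructor
    · intro hPm
      rw [mem_filter] at hPm
      obtain ⟨hPu, L, hLA, hPL, hXL⟩ := hPm
      rw [mem_biUnion]
      refine ⟨L, mem_erase.2 ⟨?_, mem_pencil.2 ⟨hLA, hXL⟩⟩, mem_filter.2 ⟨hPL, hPu⟩⟩
      rintro rfl
      exact ucls_not_mem hPu h2 hPL
    · intro hPm
      rw [mem_biUnion] at hPm
      obtain ⟨L, hL, hPf⟩ := hPm
      rw [mem_filter] at hPf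
      have hLp := mem_pencil.1 (mem_of_mem_erase hL)
      exact mem_filter.2 ⟨hPf.2, L, hLp.1, hPf.1, hLp.2⟩
  have hdisj : ∀ L₁ ∈ (pencil A X).erase M₂, ∀ L₂ ∈ (pencil A X).erase M₂, L₁ ≠ L₂ →
      Disjoint (L₁.filter (fun Y => Y ∈ ucls S A M)) (L₂.filter (fun Y => Y ∈ ucls S A M)) := by
    intro L₁ h1 L₂ h2' hne
    rw [disjoint_left]
    intro x hx1 hx2
    rw [mem_filter] at hx1 hx2
    have : x ∈ L₁ ∩ L₂ := mem_inter.2 ⟨hx1.1, hx2.1⟩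
    rw [pencil_inter C (mem_of_mem_erase h1) (mem_of_mem_erase h2') hne,
      mem_singleton] at this
    exact hXu (this ▸ hx1.2)
  rw [hbeq, card_biUnion hdisj]
  rw [Finset.sum_congr rfl (fun L hL => ?_), Finset.sum_const, smul_eq_mul]
  have hLp := mem_pencil.1 (mem_of_mem_erase hL)
  have hnL : L ∉ cls A M := by
    intro hc
    exact (mem_erase.1 hL).1 (cls_unique_through C hM hc h2 hLp.2 hX)
  have := line_trans C hM hLp.1 hnL
  omega

/-- every nonempty `ucls M` contains a point lying on exactly n lines -/
lemma exists_good_point (C : Ctx n S A) {M : Finset α} (hM : M ∈ A)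
    (hU : (ucls S A M).Nonempty) : ∃ P ∈ ucls S A M, (pencil A P).card = n := by
  by_contra hcon
  push_neg at hcon
  have hucard := ucls_card C hM
  have hUpos : 1 ≤ (ucls S A M).card := card_pos.2 hU
  have hklt : (cls A M).card < n := by
    by_contra hk
    push_neg at hk
    have : n * n ≤ (cls A M).card * n := Nat.mul_le_mul_right n hk
    have hp2 : n ^ 2 = n * n := pow_two n
    omega
  obtain ⟨dd, hdd, hdd1⟩ : ∃ dd, (cls A M).card + dd = n ∧ 1 ≤ dd :=
    ⟨n - (cls A M).card, by omega, by omega⟩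
  have hUc : (ucls S A M).card = dd * n := by
    have : n ^ 2 = (cls A M).card * n + dd * n := by
      rw [pow_two, ← hdd]; ring
    omega
  -- each point of ucls is on at most n-1 lines
  have hrP : ∀ P ∈ ucls S A M, (pencil A P).card + 1 ≤ n := by
    intro P hP
    have h1 : (pencil A P).card ≤ n := by
      apply missed_rle C hM
      intro L hLA hp
      exact fun hPL => ucls_not_mem hP (mem_filter.2 ⟨hLA, hp⟩) hPL
    have h2 := hcon P hP
    omega
  -- per-line sum bound
  have hline : ∀ M₂ ∈ cls A M, ∑ X ∈ M₂, (pencil A X).card ≤ n * n := by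
    intro M₂ h2
    have hM₂A : M₂ ∈ A := cls_mem_A h2
    have hswap := swap_count (ucls S A M) M₂ (fun P X => ¬ ∃ L ∈ A, P ∈ L ∧ X ∈ L)
    beta_reduce at hswap
    -- lower bound on Z
    have hZlb : (ucls S A M).card ≤
        ∑ P ∈ (ucls S A M), (M₂.filter (fun X => ¬ ∃ L ∈ A, P ∈ L ∧ X ∈ L)).card := by
      rw [Finset.card_eq_sum_ones (ucls S A M)]
      apply Finset.sum_le_sum
      intro P hP
      have hsplit := card_filter_add_card_filter_not (s := M₂)
        (p := fun X => ∃ L ∈ A, P ∈ L ∧ X ∈ L)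
      rw [point_line_count C hM hP h2, C.cardl M₂ hM₂A] at hsplit
      have := hrP P hP
      omega
    -- per-X identities
    have hXid : ∀ X ∈ M₂,
        ((pencil A X).erase M₂).card * dd
          + ((ucls S A M).filter (fun P => ¬ ∃ L ∈ A, P ∈ L ∧ X ∈ L)).card = dd * n := by
      intro X hX
      have hsplit := card_filter_add_card_filter_not (s := ucls S A M)
        (p := fun P => ∃ L ∈ A, P ∈ L ∧ X ∈ L)
      rw [ucls_line_count C hM h2 hX hdd, hUc] at hsplit
      exact hsplit
    have hsum2 : ∑ X ∈ M₂, (((pencil A X).erase M₂).card * dd)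
        + ∑ X ∈ M₂, ((ucls S A M).filter (fun P => ¬ ∃ L ∈ A, P ∈ L ∧ X ∈ L)).card
        = n * (dd * n) := by
      rw [← Finset.sum_add_distrib]
      rw [Finset.sum_congr rfl hXid, Finset.sum_const, smul_eq_mul, C.cardl M₂ hM₂A]
    rw [← hswap] at hsum2
    have hZlb' := hZlb
    rw [hUc] at hZlb'
    -- so ∑ eX * dd ≤ n*(dd*n) - dd*n
    have h3 : ∑ X ∈ M₂, (((pencil A X).erase M₂).card * dd) + dd * n ≤ n * (dd * n) := by
      omega
    have h4 : dd * (∑ X ∈ M₂, ((pencil A X).erase M₂).card + n) ≤ dd * (n * n) := by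
      have : ∑ X ∈ M₂, (((pencil A X).erase M₂).card * dd)
          = dd * ∑ X ∈ M₂, ((pencil A X).erase M₂).card := by
        rw [Finset.mul_sum]
        exact Finset.sum_congr rfl (fun X _ => mul_comm _ _)
      rw [this] at h3
      calc dd * (∑ X ∈ M₂, ((pencil A X).erase M₂).card + n)
          = dd * ∑ X ∈ M₂, ((pencil A X).erase M₂).card + dd * n := by ring
        _ ≤ n * (dd * n) := h3
        _ = dd * (n * n) := by ring
    have h5 : ∑ X ∈ M₂, ((pencil A X).erase M₂).card + n ≤ n * n :=
      Nat.le_of_mul_le_mul_left h4 (by omega)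
    have h6 : ∑ X ∈ M₂, (pencil A X).card
        = ∑ X ∈ M₂, ((pencil A X).erase M₂).card + n := by
      have he : ∀ X ∈ M₂, (pencil A X).card = ((pencil A X).erase M₂).card + 1 :=
        fun X hX => (card_erase_add_one (mem_pencil.2 ⟨hM₂A, hX⟩)).symm
      rw [Finset.sum_congr rfl he, Finset.sum_add_distrib]
      congr 1
      rw [Finset.sum_const, smul_eq_mul, mul_one, C.cardl M₂ hM₂A]
    rw [h6]
    exact h5
  -- global sum
  have hglob := sum_pencil C
  have hcover : S = ucls S A M ∪ (cls A M).biUnion (fun L => L) := by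
    apply Finset.ext
    intro x
    constructor
    · intro hx
      rw [mem_union]
      by_cases hxu : x ∈ ucls S A M
      · exact Or.inl hxu
      · right
        rw [ucls, mem_filter] at hxu
        push_neg at hxu
        obtain ⟨L, hLA, hpar, hxL⟩ := hxu hx
        rw [mem_biUnion]
        exact ⟨L, mem_filter.2 ⟨hLA, hpar⟩, hxL⟩
    · intro hx
      rcases mem_union.1 hx with h | h
      · exact mem_of_mem_filter _ h
      · rw [mem_biUnion] at h
        obtain ⟨L, hL, hxL⟩ := h
        exact C.sub L (cls_mem_A hL) hxL
  have hdisj : Disjoint (ucls S A M) ((cls A M).biUnion (fun L => L)) := by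
    rw [disjoint_left]
    intro x hxu hxb
    rw [mem_biUnion] at hxb
    obtain ⟨L, hL, hxL⟩ := hxb
    exact ucls_not_mem hxu hL hxL
  have hsplitS : ∑ Y ∈ S, (pencil A Y).card
      = ∑ Y ∈ ucls S A M, (pencil A Y).card
        + ∑ Y ∈ (cls A M).biUnion (fun L => L), (pencil A Y).card := by
    conv_lhs => rw [hcover]
    exact Finset.sum_union hdisj
  have hdisj2 : Set.PairwiseDisjoint ↑(cls A M) (id : Finset α → Finset α) := by
    intro M₁ h1 M₂ h2 hne
    simp only [Function.onFun, id]
    rw [disjoint_iff_inter_eq_empty]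
    exact par_disjoint (cls_par C hM h1 h2) hne
  have hsumb : ∑ Y ∈ (cls A M).biUnion (fun L => L), (pencil A Y).card
      = ∑ M₂ ∈ cls A M, ∑ X ∈ M₂, (pencil A X).card := Finset.sum_biUnion hdisj2
  have hcovbd : ∑ M₂ ∈ cls A M, ∑ X ∈ M₂, (pencil A X).card ≤ (cls A M).card * (n * n) := by
    calc ∑ M₂ ∈ cls A M, ∑ X ∈ M₂, (pencil A X).card
        ≤ ∑ M₂ ∈ cls A M, (n * n) := Finset.sum_le_sum hline
      _ = (cls A M).card * (n * n) := by rw [Finset.sum_const, smul_eq_mul]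
  have hubd : ∑ Y ∈ ucls S A M, (pencil A Y).card ≤ dd * n * (n - 1) := by
    calc ∑ Y ∈ ucls S A M, (pencil A Y).card ≤ ∑ Y ∈ ucls S A M, (n - 1) := by
          apply Finset.sum_le_sum
          intro P hP
          have := hrP P hP
          omega
      _ = dd * n * (n - 1) := by rw [Finset.sum_const, smul_eq_mul, hUc]
  have hbig : n ^ 2 * n ≤ A.card * n := Nat.mul_le_mul_right n C.big
  have hfin : n ^ 2 * n ≤ (cls A M).card * (n * n) + dd * n * (n - 1) := by
    rw [← hglob, hsplitS, hsumb] at hbig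
    omega
  have hkey : (cls A M).card * (n * n) + dd * n * (n - 1) + dd * n = n ^ 2 * n := by
    have h1 : dd * n * (n - 1) + dd * n = dd * n * n := by
      have : n - 1 + 1 = n := by have := C.hn; omega
      calc dd * n * (n - 1) + dd * n = dd * n * ((n - 1) + 1) := by ring
        _ = dd * n * n := by rw [this]
    calc (cls A M).card * (n * n) + dd * n * (n - 1) + dd * n
        = (cls A M).card * (n * n) + dd * n * n := by omega
      _ = ((cls A M).card + dd) * (n * n) := by ring
      _ = n * (n * n) := by rw [hdd]
      _ = n ^ 2 * n := by ring
  have := C.hn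
  omega

/-- no second parallel class misses a good point -/
lemma no_second (C : Ctx n S A) {M : Finset α} (hM : M ∈ A) (hU : (ucls S A M).Nonempty)
    {P : α} (hP : P ∈ ucls S A M) (hr : (pencil A P).card = n)
    {M' : Finset α} (hM' : M' ∈ A) (hnp : ¬ par M M') :
    ∃ m ∈ A, P ∈ m ∧ par M' m := by
  by_contra hcon
  push_neg at hcon
  have hPM' : P ∉ M' := fun h => hcon M' hM' h (par_refl M')
  have hPM : P ∉ M := ucls_not_mem hP (mem_cls_self hM)
  have hMne : M ≠ M' := fun h => hnp (h ▸ par_refl M)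
  set W : Finset (Finset α) := insert M (insert M' (pencil A P)) with hW
  have hWA : W ⊆ A := by
    intro L hL
    rw [hW, mem_insert, mem_insert] at hL
    rcases hL with rfl | rfl | hL
    · exact hM
    · exact hM'
    · exact (mem_pencil.1 hL).1
  have hWcard : W.card = n + 2 := by
    rw [hW, card_insert_of_notMem, card_insert_of_notMem, hr]
    · intro h; exact hPM' (mem_pencil.1 h).2
    · rw [mem_insert]
      push_neg
      exact ⟨hMne, fun h => hPM (mem_pencil.1 h).2⟩
  have hWnp : ∀ W₁ ∈ W, ∀ W₂ ∈ W, W₁ ≠ W₂ → ¬ par W₁ W₂ := by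
    have hMp : ∀ L ∈ pencil A P, ¬ par M L := by
      intro L hL hp
      rw [mem_pencil] at hL
      exact ucls_not_mem hP (mem_filter.2 ⟨hL.1, hp⟩) hL.2
    have hM'p : ∀ L ∈ pencil A P, ¬ par M' L := by
      intro L hL hp
      rw [mem_pencil] at hL
      exact hcon L hL.1 hL.2 hp
    have hpp : ∀ L₁ ∈ pencil A P, ∀ L₂ ∈ pencil A P, L₁ ≠ L₂ → ¬ par L₁ L₂ := by
      intro L₁ h1 L₂ h2 hne hp
      have := par_disjoint hp hne
      rw [pencil_inter C h1 h2 hne] at this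
      simp at this
    intro W₁ h1 W₂ h2 hne
    rw [hW, mem_insert, mem_insert] at h1 h2
    rcases h1 with rfl | rfl | h1 <;> rcases h2 with rfl | rfl | h2
    · exact absurd rfl hne
    · exact hnp
    · exact hMp _ h2
    · exact fun hp => hnp (par_symm hp)
    · exact absurd rfl hne
    · exact hM'p _ h2
    · exact fun hp => hMp _ h1 (par_symm hp)
    · exact fun hp => hM'p _ h1 (par_symm hp)
    · exact hpp _ h1 _ h2 hne
  -- every point of S is missed by the class of some line in W
  have hallmiss : ∀ Y ∈ S, ∃ Wl ∈ W, ∀ L ∈ A, par Wl L → Y ∉ L := by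
    intro Y hY
    by_contra hc
    push_neg at hc
    have huniq : ∀ Wl ∈ W, ∃! L, L ∈ A ∧ (par Wl L ∧ Y ∈ L) := by
      intro Wl hWl
      obtain ⟨L, hLA, hp, hYL⟩ := hc Wl hWl
      refine ⟨L, ⟨hLA, hp, hYL⟩, ?_⟩
      rintro L' ⟨hL'A, hp', hYL'⟩
      by_contra hne
      have hWlA := hWA hWl
      have : par L' L := C.ptrans L' hL'A Wl hWlA L hLA (par_symm hp') hp
      have hd := par_disjoint this hne
      have : Y ∈ L' ∩ L := mem_inter.2 ⟨hYL', hYL⟩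
      rw [hd] at this; simp at this
    have hle : W.card ≤ (pencil A Y).card := by
      apply card_le_card_of_injOn
        (fun Wl => if h : Wl ∈ W then Finset.choose (fun L => par Wl L ∧ Y ∈ L) A (huniq Wl h) else ∅)
      · intro Wl hWl
        simp only [dif_pos (show Wl ∈ W from hWl)]
        have h1 := Finset.choose_mem (fun L => par Wl L ∧ Y ∈ L) A (huniq Wl hWl)
        have h2 := Finset.choose_property (fun L => par Wl L ∧ Y ∈ L) A (huniq Wl hWl)
        exact mem_pencil.2 ⟨h1, h2.2⟩
      · intro W₁ h1 W₂ h2 heq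
        have h1' : W₁ ∈ W := h1
        have h2' : W₂ ∈ W := h2
        simp only [dif_pos h1', dif_pos h2'] at heq
        by_contra hne
        have hp1 := Finset.choose_property (fun L => par W₁ L ∧ Y ∈ L) A (huniq W₁ h1')
        have hp2 := Finset.choose_property (fun L => par W₂ L ∧ Y ∈ L) A (huniq W₂ h2')
        have hmem1 := Finset.choose_mem (fun L => par W₁ L ∧ Y ∈ L) A (huniq W₁ h1')
        rw [heq] at hp1
        have : par W₁ W₂ := by
          apply C.ptrans W₁ (hWA h1') _ ((heq ▸ hmem1)) W₂ (hWA h2') hp1.1 (par_symm hp2.1)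
        exact hWnp W₁ h1' W₂ h2' hne this
    rw [hWcard] at hle
    have := pencil_le C hY
    omega
  -- every point is on at most n lines, and total forces exactly n
  have hrall : ∀ Y ∈ S, (pencil A Y).card ≤ n := by
    intro Y hY
    obtain ⟨Wl, hWl, hmiss⟩ := hallmiss Y hY
    exact missed_rle C (hWA hWl) hmiss
  have hglob := sum_pencil C
  have hSn : ∑ Y ∈ S, (pencil A Y).card = n ^ 2 * n := by
    have hub : ∑ Y ∈ S, (pencil A Y).card ≤ n ^ 2 * n := by
      calc ∑ Y ∈ S, (pencil A Y).card ≤ ∑ _Y ∈ S, n :=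
            Finset.sum_le_sum (fun Y hY => hrall Y hY)
        _ = n ^ 2 * n := by rw [Finset.sum_const, smul_eq_mul, C.hS]
    have hlb : n ^ 2 * n ≤ ∑ Y ∈ S, (pencil A Y).card := by
      rw [hglob]; exact Nat.mul_le_mul_right n C.big
    exact le_antisymm hub hlb
  have hreq : ∀ Y ∈ S, (pencil A Y).card = n := by
    intro Y hY
    by_contra hne
    have hlt : (pencil A Y).card < n := lt_of_le_of_ne (hrall Y hY) hne
    have hstrict := Finset.sum_lt_sum (f := fun Y => (pencil A Y).card)
      (g := fun _ => n) (fun i hi => hrall i hi) ⟨Y, hY, hlt⟩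
    rw [Finset.sum_const, smul_eq_mul, C.hS] at hstrict
    exact absurd hSn (ne_of_lt hstrict)
  -- final double count on the line M itself
  have hUpos := card_pos.2 hU
  have hucard := ucls_card C hM
  have hklt : (cls A M).card < n := by
    by_contra hk
    push_neg at hk
    have : n * n ≤ (cls A M).card * n := Nat.mul_le_mul_right n hk
    have hp2 : n ^ 2 = n * n := pow_two n
    omega
  obtain ⟨dd, hdd, hdd1⟩ : ∃ dd, (cls A M).card + dd = n ∧ 1 ≤ dd :=
    ⟨n - (cls A M).card, by omega, by omega⟩
  have hUc : (ucls S A M).card = dd * n := by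
    have : n ^ 2 = (cls A M).card * n + dd * n := by
      rw [pow_two, ← hdd]; ring
    omega
  have hswap := swap_count (ucls S A M) M (fun P' X => ¬ ∃ L ∈ A, P' ∈ L ∧ X ∈ L)
  beta_reduce at hswap
  have hzero : ∑ P' ∈ ucls S A M, (M.filter (fun X => ¬ ∃ L ∈ A, P' ∈ L ∧ X ∈ L)).card
      = 0 := by
    apply Finset.sum_eq_zero
    intro P' hP'
    have hsplit := card_filter_add_card_filter_not (s := M)
      (p := fun X => ∃ L ∈ A, P' ∈ L ∧ X ∈ L)
    rw [point_line_count C hM hP' (mem_cls_self hM),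
      hreq P' (mem_of_mem_filter _ hP'), C.cardl M hM] at hsplit
    omega
  obtain ⟨X₀, hX₀⟩ : M.Nonempty := card_pos.1 (by rw [C.cardl M hM]; have := C.hn; omega)
  rw [hzero] at hswap
  have hall0 := (Finset.sum_eq_zero_iff.1 hswap.symm) X₀ hX₀
  have hsplit := card_filter_add_card_filter_not (s := ucls S A M)
    (p := fun P' => ∃ L ∈ A, P' ∈ L ∧ X₀ ∈ L)
  rw [ucls_line_count C hM (mem_cls_self hM) hX₀ hdd, hUc, hall0] at hsplit
  have he : ((pencil A X₀).erase M).card + 1 = n := by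
    rw [card_erase_add_one (mem_pencil.2 ⟨hM, hX₀⟩)]
    exact hreq X₀ (C.sub M hM hX₀)
  have h2 : ((pencil A X₀).erase M).card * dd + dd = dd * n := by
    calc ((pencil A X₀).erase M).card * dd + dd
        = (((pencil A X₀).erase M).card + 1) * dd := by ring
      _ = n * dd := by rw [he]
      _ = dd * n := mul_comm _ _
  omega


lemma cls_card_le (C : Ctx n S A) {M : Finset α} (hM : M ∈ A) : (cls A M).card ≤ n := by
  have h := ucls_card C hM
  have hp2 : n ^ 2 = n * n := pow_two n
  by_contra hc
  push_neg at hc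
  have : n * n < (cls A M).card * n := by
    have hn0 : 0 < n := by have := C.hn; omega
    exact (Nat.mul_lt_mul_right hn0).2 hc
  omega

/-- basic properties of the candidate new line through a good point -/
lemma newline_basic (C : Ctx n S A) {P : α} (hPS : P ∈ S) (hr : (pencil A P).card = n) :
    insert P (us S A P) ⊆ S ∧ (insert P (us S A P)).card = n ∧
    insert P (us S A P) ∉ A ∧
    (∀ x ∈ insert P (us S A P), ∀ y ∈ insert P (us S A P), x ≠ y →
      ∀ L ∈ A, ¬(x ∈ L ∧ y ∈ L)) := by
  have hn2 := C.hn
  have hr1 : 1 ≤ (pencil A P).card := by omega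
  obtain ⟨L₀, hL₀⟩ := card_pos.1 hr1
  rw [mem_pencil] at hL₀
  have hPus : P ∉ us S A P := by
    intro h
    exact (mem_filter.1 h).2 L₀ hL₀.1 hL₀.2 hL₀.2
  have huscard : (us S A P).card + 1 = n := by
    have h := us_card C hPS hr1
    rw [hr] at h
    obtain ⟨m, hm⟩ : ∃ m, n = m + 1 := ⟨n - 1, by omega⟩
    have h2 : n * (n - 1) + n = n ^ 2 := by
      subst hm
      simp only [Nat.add_sub_cancel]
      ring
    omega
  have hsub : insert P (us S A P) ⊆ S := by
    intro x hx
    rcases mem_insert.1 hx with rfl | hx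
    · exact hPS
    · exact mem_of_mem_filter _ hx
  have hcard : (insert P (us S A P)).card = n := by
    rw [card_insert_of_notMem hPus]
    omega
  have husne : (us S A P).Nonempty := card_pos.1 (by omega)
  have hNA : insert P (us S A P) ∉ A := by
    intro hN
    obtain ⟨Q, hQ⟩ := husne
    exact (mem_filter.1 hQ).2 _ hN (mem_insert_self _ _) (mem_insert_of_mem hQ)
  refine ⟨hsub, hcard, hNA, ?_⟩
  intro x hx y hy hne L hL ⟨hxL, hyL⟩
  rcases mem_insert.1 hx with rfl | hx <;> rcases mem_insert.1 hy with rfl | hy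
  · exact hne rfl
  · exact (mem_filter.1 hy).2 L hL hxL hyL
  · exact (mem_filter.1 hx).2 L hL hyL hxL
  · exact us_clique C hPS hr hx hy hne hL ⟨hxL, hyL⟩

/-- Case I: some parallel class misses a point; we can add a line to that class -/
lemma newline_caseI (C : Ctx n S A) {M : Finset α} (hM : M ∈ A)
    (hU : (ucls S A M).Nonempty) :
    ∃ N : Finset α, N ⊆ S ∧ N.card = n ∧ N ∉ A ∧
      (∀ x ∈ N, ∀ y ∈ N, x ≠ y → ∀ L ∈ A, ¬(x ∈ L ∧ y ∈ L)) ∧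
      (∀ L ∈ A, (par N L ↔ L ∈ cls A M)) := by
  obtain ⟨P, hP, hr⟩ := exists_good_point C hM hU
  have hPS : P ∈ S := mem_of_mem_filter _ hP
  obtain ⟨hsub, hcard, hNA, hclq⟩ := newline_basic C hPS hr
  refine ⟨insert P (us S A P), hsub, hcard, hNA, hclq, ?_⟩
  intro L hL
  constructor
  · intro hp
    by_contra hLn
    -- then N meets L, contradiction with par
    have hnpML : ¬ par M L := fun h => hLn (mem_filter.2 ⟨hL, h⟩)
    have hmeetNL : ∃ X ∈ L, X ∈ insert P (us S A P) := by
      by_cases hPL : P ∈ L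
      · exact ⟨P, hPL, mem_insert_self _ _⟩
      · obtain ⟨m, hmA, hPm, hpar⟩ := no_second C hM hU hP hr hL hnpML
        have hmne : m ≠ L := fun h => hPL (h ▸ hPm)
        obtain ⟨X, hXL, hXus⟩ := missing_point C hPS hr hL hPL hmA hPm hpar
        exact ⟨X, hXL, mem_insert_of_mem hXus⟩
    obtain ⟨X, hXL, hXN⟩ := hmeetNL
    rcases hp with heq | hemp
    · exact hNA (heq ▸ hL)
    · have : X ∈ insert P (us S A P) ∩ L := mem_inter.2 ⟨hXN, hXL⟩
      rw [hemp] at this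
      simp at this
  · intro hLc
    right
    rw [eq_empty_iff_forall_notMem]
    intro x hx
    rw [mem_inter] at hx
    have hPL : P ∉ L := ucls_not_mem hP hLc
    rcases mem_insert.1 hx.1 with rfl | hxus
    · exact hPL hx.2
    · -- every point of L is joined to P, contradicting x ∈ us
      have hT : ∀ L' ∈ pencil A P, ¬ par L' L := by
        intro L' hL' hp
        have hL'p := mem_pencil.1 hL'
        exact ucls_not_mem hP (cls_closed C hM hLc hL'p.1 (par_symm hp)) hL'p.2
      obtain ⟨L₂, hL₂A, hPL₂, hxL₂⟩ := covered_line C hr hL hPL hT x hx.2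
      exact (mem_filter.1 hxus).2 L₂ hL₂A hPL₂ hxL₂

/-- Case II: every class covers every point (a net); the new line is its own class -/
lemma newline_caseII (C : Ctx n S A)
    (hcov : ∀ M ∈ A, ∀ Y ∈ S, ∃ L ∈ A, par M L ∧ Y ∈ L)
    {P₀ Q₀ : α} (hP₀ : P₀ ∈ S) (hQ₀ : Q₀ ∈ S) (hne : P₀ ≠ Q₀)
    (hunj : ∀ L ∈ A, ¬(P₀ ∈ L ∧ Q₀ ∈ L)) :
    ∃ N : Finset α, N ⊆ S ∧ N.card = n ∧ N ∉ A ∧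
      (∀ x ∈ N, ∀ y ∈ N, x ≠ y → ∀ L ∈ A, ¬(x ∈ L ∧ y ∈ L)) ∧
      (∀ L ∈ A, ¬ par (insert P₀ (us S A P₀)) L) ∧ N = insert P₀ (us S A P₀) := by
  have hn2 := C.hn
  have hQus : Q₀ ∈ us S A P₀ := mem_filter.2 ⟨hQ₀, fun L hL hPL hQL => hunj L hL ⟨hPL, hQL⟩⟩
  have hAne : A.Nonempty := card_pos.1 (by have := C.big; nlinarith)
  -- r = n at P₀
  have hrge : n ≤ (pencil A P₀).card := by
    have hAsub : A ⊆ (pencil A P₀).biUnion (fun L => cls A L) := by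
      intro M₂ hM₂
      obtain ⟨L, hLA, hp, hPL⟩ := hcov M₂ hM₂ P₀ hP₀
      rw [mem_biUnion]
      exact ⟨L, mem_pencil.2 ⟨hLA, hPL⟩, mem_filter.2 ⟨hM₂, par_symm hp⟩⟩
    have h1 : A.card ≤ ∑ L ∈ pencil A P₀, (cls A L).card :=
      le_trans (card_le_card hAsub) (card_biUnion_le)
    have h2 : ∑ L ∈ pencil A P₀, (cls A L).card ≤ (pencil A P₀).card * n := by
      calc ∑ L ∈ pencil A P₀, (cls A L).card
          ≤ ∑ L ∈ pencil A P₀, n :=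
            Finset.sum_le_sum (fun L hL => cls_card_le C (mem_pencil.1 hL).1)
        _ = (pencil A P₀).card * n := by rw [Finset.sum_const, smul_eq_mul]
    have h3 : n * n ≤ (pencil A P₀).card * n := by
      have hp2 : n ^ 2 = n * n := pow_two n
      have := C.big
      omega
    have hn0 : 0 < n := by omega
    exact Nat.le_of_mul_le_mul_right h3 hn0
  have hrle := pencil_le C hP₀
  have hrne : (pencil A P₀).card ≠ n + 1 := by
    intro hr
    have h := us_card C hP₀ (by omega)
    rw [hr] at h
    obtain ⟨m, hm⟩ : ∃ m, n = m + 1 := ⟨n - 1, by omega⟩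
    have h2 : (n + 1) * (n - 1) + 1 = n ^ 2 := by
      subst hm
      simp only [Nat.add_sub_cancel]
      ring
    have husQ : 1 ≤ (us S A P₀).card := card_pos.2 ⟨Q₀, hQus⟩
    omega
  have hr : (pencil A P₀).card = n := by omega
  obtain ⟨hsub, hcard, hNA, hclq⟩ := newline_basic C hP₀ hr
  refine ⟨insert P₀ (us S A P₀), hsub, hcard, hNA, hclq, ?_, rfl⟩
  intro L hL hp
  have hmeetNL : ∃ X ∈ L, X ∈ insert P₀ (us S A P₀) := by
    by_cases hPL : P₀ ∈ L
    · exact ⟨P₀, hPL, mem_insert_self _ _⟩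
    · obtain ⟨m, hmA, hpar, hPm⟩ := hcov L hL P₀ hP₀
      have hmne : m ≠ L := fun h => hPL (h ▸ hPm)
      obtain ⟨X, hXL, hXus⟩ := missing_point C hP₀ hr hL hPL hmA hPm hpar
      exact ⟨X, hXL, mem_insert_of_mem hXus⟩
  obtain ⟨X, hXL, hXN⟩ := hmeetNL
  rcases hp with heq | hemp
  · exact hNA (heq ▸ hL)
  · have : X ∈ insert P₀ (us S A P₀) ∩ L := mem_inter.2 ⟨hXN, hXL⟩
    rw [hemp] at this
    simp at this

/-- inserting a suitable new line preserves the context -/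
lemma ctx_insert (C : Ctx n S A) {N : Finset α} (hNS : N ⊆ S) (hNc : N.card = n)
    (hNA : N ∉ A)
    (hclq : ∀ x ∈ N, ∀ y ∈ N, x ≠ y → ∀ L ∈ A, ¬(x ∈ L ∧ y ∈ L))
    (hcl1 : ∀ L ∈ A, ∀ L' ∈ A, par N L → par L L' → par N L')
    (hcl2 : ∀ L ∈ A, ∀ L' ∈ A, par N L → par N L' → par L L') :
    Ctx n S (insert N A) := by
  have hNmeet : ∀ L ∈ A, (N ∩ L).card ≤ 1 := by
    intro L hL
    rw [card_le_one]
    intro a ha b hb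
    rw [mem_inter] at ha hb
    by_contra hab
    exact hclq a ha.1 b hb.1 hab L hL ⟨ha.2, hb.2⟩
  refine ⟨C.hn, C.hS, ?_, ?_, ?_, ?_, ?_⟩
  · intro L hL
    rcases mem_insert.1 hL with rfl | hL
    · exact hNS
    · exact C.sub L hL
  · intro L hL
    rcases mem_insert.1 hL with rfl | hL
    · exact hNc
    · exact C.cardl L hL
  · intro L hL M₂ hM₂ hne
    rcases mem_insert.1 hL with heqL | hL' <;> rcases mem_insert.1 hM₂ with heqM | hM₂'
    · exact absurd (heqL.trans heqM.symm) hne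
    · rw [heqL]; exact hNmeet M₂ hM₂'
    · rw [heqM, inter_comm]; exact hNmeet L hL'
    · exact C.meet L hL' M₂ hM₂' hne
  · intro L hL M₂ hM₂ K hK h1 h2
    rcases mem_insert.1 hL with heqL | hL' <;> rcases mem_insert.1 hM₂ with heqM | hM₂' <;>
      rcases mem_insert.1 hK with heqK | hK'
    · rw [heqL, heqK]; exact par_refl N
    · rw [heqL]; rw [heqM] at h2; exact h2
    · rw [heqL, heqK]; exact par_refl N
    · rw [heqL] at h1 ⊢; exact hcl1 M₂ hM₂' K hK' h1 h2
    · rw [heqK]; rw [heqM] at h1; exact h1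
    · rw [heqM] at h1 h2
      exact hcl2 L hL' K hK' (par_symm h1) h2
    · rw [heqK] at h2 ⊢
      exact par_symm (hcl1 M₂ hM₂' L hL' (par_symm h2) (par_symm h1))
    · exact C.ptrans L hL' M₂ hM₂' K hK' h1 h2
  · exact le_trans C.big (card_le_card (subset_insert _ _))

/-- the unjoined pairs -/
def up (S : Finset α) (A : Finset (Finset α)) : Finset (α × α) :=
  (S ×ˢ S).filter (fun p => p.1 ≠ p.2 ∧ ∀ L ∈ A, ¬(p.1 ∈ L ∧ p.2 ∈ L))

lemma up_insert_ssub {N : Finset α} {x y : α}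
    (hx : x ∈ N) (hy : y ∈ N) (hxy : x ≠ y) (hxy_up : (x, y) ∈ up S A) :
    up S (insert N A) ⊂ up S A := by
  have hsub : up S (insert N A) ⊆ up S A := by
    intro p hp
    rw [up, mem_filter] at hp ⊢
    exact ⟨hp.1, hp.2.1, fun L hL => hp.2.2 L (mem_insert_of_mem hL)⟩
  refine ⟨hsub, fun hsup => ?_⟩
  have := hsup hxy_up
  rw [up, mem_filter] at this
  exact this.2.2 N (mem_insert_self _ _) ⟨hx, hy⟩

/-- if there are no unjoined pairs, we are done -/
lemma done_of_up_empty (C : Ctx n S A) (h0 : up S A = ∅) :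
    ∃ A', A ⊆ A' ∧ (∀ L ∈ A', L ⊆ S ∧ L.card = n) ∧
      ∀ P ∈ S, ∀ Q ∈ S, P ≠ Q → ∃! L, L ∈ A' ∧ P ∈ L ∧ Q ∈ L := by
  refine ⟨A, Finset.Subset.refl A, fun L hL => ⟨C.sub L hL, C.cardl L hL⟩, ?_⟩
  intro P hP Q hQ hPQ
  have hnm : (P, Q) ∉ up S A := by rw [h0]; exact notMem_empty _
  rw [up, mem_filter] at hnm
  push_neg at hnm
  have h1 := hnm (Finset.mem_product.2 ⟨hP, hQ⟩) hPQ
  obtain ⟨L, hL, hPL, hQL⟩ := h1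
  refine ⟨L, ⟨hL, hPL, hQL⟩, ?_⟩
  rintro L' ⟨hL', hPL', hQL'⟩
  exact two_of_line C hL' hL hPL' hPL hQL' hQL hPQ

/-- main recursion: repeatedly add lines until all pairs are joined -/
lemma complete_aux : ∀ (k : ℕ) (A : Finset (Finset α)), Ctx n S A → (up S A).card ≤ k →
    ∃ A', A ⊆ A' ∧ (∀ L ∈ A', L ⊆ S ∧ L.card = n) ∧
      ∀ P ∈ S, ∀ Q ∈ S, P ≠ Q → ∃! L, L ∈ A' ∧ P ∈ L ∧ Q ∈ L := by
  intro k
  induction k with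
  | zero =>
    intro A C h0
    exact done_of_up_empty C (card_eq_zero.1 (Nat.le_zero.1 h0))
  | succ k ih =>
    intro A C hcard
    by_cases hall : up S A = ∅
    · exact done_of_up_empty C hall
    · obtain ⟨⟨P₀, Q₀⟩, hup⟩ := nonempty_iff_ne_empty.2 hall
      have hup' := hup
      rw [up, mem_filter] at hup'
      obtain ⟨hprod, hne, hunj⟩ := hup'
      have hP₀ : P₀ ∈ S := (Finset.mem_product.1 hprod).1
      have hQ₀ : Q₀ ∈ S := (Finset.mem_product.1 hprod).2
      -- get a new line N with a parallel-classification
      have hstep : ∃ N : Finset α, N ⊆ S ∧ N.card = n ∧ N ∉ A ∧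
          (∀ x ∈ N, ∀ y ∈ N, x ≠ y → ∀ L ∈ A, ¬(x ∈ L ∧ y ∈ L)) ∧
          (∀ L ∈ A, ∀ L' ∈ A, par N L → par L L' → par N L') ∧
          (∀ L ∈ A, ∀ L' ∈ A, par N L → par N L' → par L L') := by
        by_cases hcase : ∃ M ∈ A, (ucls S A M).Nonempty
        · obtain ⟨M, hM, hU⟩ := hcase
          obtain ⟨N, hNS, hNc, hNA, hclq, hcl⟩ := newline_caseI C hM hU
          refine ⟨N, hNS, hNc, hNA, hclq, ?_, ?_⟩
          · intro L hL L' hL' h1 h2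
            exact (hcl L' hL').2 (cls_closed C hM ((hcl L hL).1 h1) hL' h2)
          · intro L hL L' hL' h1 h2
            exact cls_par C hM ((hcl L hL).1 h1) ((hcl L' hL').1 h2)
        · push_neg at hcase
          have hcov : ∀ M ∈ A, ∀ Y ∈ S, ∃ L ∈ A, par M L ∧ Y ∈ L := by
            intro M hM Y hY
            have h1 := hcase M hM
            have : Y ∉ ucls S A M := by rw [h1]; exact notMem_empty _
            rw [ucls, mem_filter] at this
            push_neg at this
            obtain ⟨L, hLA, hp, hYL⟩ := this hY
            exact ⟨L, hLA, hp, hYL⟩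
          obtain ⟨N, hNS, hNc, hNA, hclq, hnp, hNe⟩ :=
            newline_caseII C hcov hP₀ hQ₀ hne hunj
          refine ⟨N, hNS, hNc, hNA, hclq, ?_, ?_⟩
          · intro L hL L' hL' h1 h2
            exact absurd (hNe ▸ h1) (hnp L hL)
          · intro L hL L' hL' h1 h2
            exact absurd (hNe ▸ h1) (hnp L hL)
      obtain ⟨N, hNS, hNc, hNA, hclq, hcl1, hcl2⟩ := hstep
      have C' := ctx_insert C hNS hNc hNA hclq hcl1 hcl2
      -- strict decrease of unjoined pairs
      have h2N : ∃ x ∈ N, ∃ y ∈ N, x ≠ y := by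
        rw [← Finset.one_lt_card]
        have := C.hn
        omega
      obtain ⟨x, hx, y, hy, hxy⟩ := h2N
      have hxy_up : (x, y) ∈ up S A := by
        rw [up, mem_filter]
        exact ⟨Finset.mem_product.2 ⟨hNS hx, hNS hy⟩, hxy,
          fun L hL => hclq x hx y hy hxy L hL⟩
      have hss := up_insert_ssub hx hy hxy hxy_up
      have hlt := card_lt_card hss
      obtain ⟨A', hsub', hprops, hpairs⟩ := ih (insert N A) C' (by omega)
      exact ⟨A', le_trans (subset_insert N A) hsub', hprops, hpairs⟩


end PAP5

/-- a partial affine plane of order n with at least n² lines in which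
parallelism is an equivalence relation can be completed to an affine plane of order n. -/
theorem stmt_5 {α : Type*} [DecidableEq α] (n : ℕ) (hn : 2 ≤ n)
    (S : Finset α) (A : Finset (Finset α))
    (hS : S.card = n ^ 2)
    (hlines : ∀ L ∈ A, L ⊆ S ∧ L.card = n)
    (hmeet : ∀ L ∈ A, ∀ M ∈ A, L ≠ M → (L ∩ M).card ≤ 1)
    (hequiv : Equivalence (fun (L M : {x // x ∈ A}) => L.1 = M.1 ∨ L.1 ∩ M.1 = ∅))
    (hb : n ^ 2 ≤ A.card) :
    ∃ A' : Finset (Finset α), A ⊆ A' ∧ (∀ L ∈ A', L ⊆ S ∧ L.card = n) ∧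
      ∀ P ∈ S, ∀ Q ∈ S, P ≠ Q → ∃! L, L ∈ A' ∧ P ∈ L ∧ Q ∈ L := by
  have C : PAP5.Ctx n S A := {
    hn := hn
    hS := hS
    sub := fun L hL => (hlines L hL).1
    cardl := fun L hL => (hlines L hL).2
    meet := hmeet
    ptrans := by
      intro L hL M hM K hK h1 h2
      have := hequiv.trans (x := ⟨L, hL⟩) (y := ⟨M, hM⟩) (z := ⟨K, hK⟩) h1 h2
      exact this
    big := hb }
  exact PAP5.complete_aux (PAP5.up S A).card A C le_rfl
end

section
/- Let (S, A) be a partial affine plane of order n (n ≥ 2) with b = n² − a lines, where 1 ≤ a ≤ n − 1, and suppose no point has valency n + 1. Then for every line ℓ ∈ A, the number of lines of A parallel to ℓ (including ℓ itself) is at least n − a. -/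
/-!
The lines through a point `P` are disjoint outside `P`, so they cover `(n - 1) · valency P`
of the `n² - 1` points other than `P`; hence every valency is at most `n + 1`, and here at
most `n`. A line meeting `ℓ` but different from it passes through one of the `n` points of
`ℓ`, each of which lies on at most `n - 1` further lines, so at most `n (n - 1)` lines are
not parallel to `ℓ`, leaving at least `n² - a - n (n - 1) = n - a` parallel ones.
-/

open Finset

theorem disjoint_erase_of_card_inter_le_one {α : Type*} [DecidableEq α] {L M : Finset α}
    {P : α} (hLM : (L ∩ M).card ≤ 1) (hL : P ∈ L) (hM : P ∈ M) :
    Disjoint (L.erase P) (M.erase P) := by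
  rw [Finset.disjoint_left]
  intro x hxL hxM
  have hxP : x = P := Finset.card_le_one.mp hLM x
    (mem_inter.mpr ⟨mem_of_mem_erase hxL, mem_of_mem_erase hxM⟩) P (mem_inter.mpr ⟨hL, hM⟩)
  exact ne_of_mem_erase hxL hxP

section PartialLinearSpace

variable {α : Type*} [DecidableEq α] {n : ℕ} {S : Finset α} {A : Finset (Finset α)}

theorem valency_mul_le (hlines : ∀ L ∈ A, L ⊆ S ∧ L.card = n)
    (hmeet : ∀ L ∈ A, ∀ M ∈ A, L ≠ M → (L ∩ M).card ≤ 1) {P : α} (hP : P ∈ S) :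
    valency A P * (n - 1) ≤ S.card - 1 := by
  set pencil := A.filter (fun L => P ∈ L)
  have hdisj : (pencil : Set (Finset α)).PairwiseDisjoint (fun L => L.erase P) := by
    intro L hL M hM hne
    rw [mem_coe, mem_filter] at hL hM
    exact disjoint_erase_of_card_inter_le_one (hmeet L hL.1 M hM.1 hne) hL.2 hM.2
  have hcover : pencil.biUnion (fun L => L.erase P) ⊆ S.erase P := by
    intro x hx
    obtain ⟨L, hL, hxL⟩ := mem_biUnion.mp hx
    exact mem_erase.mpr
      ⟨ne_of_mem_erase hxL, (hlines L (mem_filter.mp hL).1).1 (mem_of_mem_erase hxL)⟩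
  calc valency A P * (n - 1) = ∑ L ∈ pencil, (L.erase P).card := by
        rw [sum_congr rfl fun L hL => ?_, sum_const, smul_eq_mul, valency]
        rw [card_erase_of_mem (mem_filter.mp hL).2, (hlines L (mem_filter.mp hL).1).2]
    _ = (pencil.biUnion (fun L => L.erase P)).card := (card_biUnion hdisj).symm
    _ ≤ (S.erase P).card := card_le_card hcover
    _ = S.card - 1 := card_erase_of_mem hP

theorem valency_le_succ (hn : 2 ≤ n) (hS : S.card = n ^ 2)
    (hlines : ∀ L ∈ A, L ⊆ S ∧ L.card = n)
    (hmeet : ∀ L ∈ A, ∀ M ∈ A, L ≠ M → (L ∩ M).card ≤ 1) {P : α} (hP : P ∈ S) :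
    valency A P ≤ n + 1 := by
  have h := valency_mul_le hlines hmeet hP
  have hsq : S.card - 1 = (n + 1) * (n - 1) := by
    rw [hS, ← Nat.sq_sub_sq, one_pow]
  rw [hsq] at h
  exact Nat.le_of_mul_le_mul_right h (by omega)

end PartialLinearSpace

theorem card_filter_not_parallel_le {α : Type*} [DecidableEq α] {A : Finset (Finset α)}
    {ℓ : Finset α} (hℓ : ℓ ∈ A) {k : ℕ} (hval : ∀ P ∈ ℓ, valency A P ≤ k) :
    (A.filter (fun m => ¬(m = ℓ ∨ m ∩ ℓ = ∅))).card ≤ ℓ.card * (k - 1) := by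
  have hcover : A.filter (fun m => ¬(m = ℓ ∨ m ∩ ℓ = ∅)) ⊆
      ℓ.biUnion (fun P => (A.filter (fun m => P ∈ m)).erase ℓ) := by
    intro m hm
    obtain ⟨hmA, hmℓ⟩ := mem_filter.mp hm
    rw [not_or] at hmℓ
    obtain ⟨P, hP⟩ := nonempty_iff_ne_empty.mpr hmℓ.2
    exact mem_biUnion.mpr ⟨P, (mem_inter.mp hP).2,
      mem_erase.mpr ⟨hmℓ.1, mem_filter.mpr ⟨hmA, (mem_inter.mp hP).1⟩⟩⟩
  calc _ ≤ (ℓ.biUnion (fun P => (A.filter (fun m => P ∈ m)).erase ℓ)).card := card_le_card hcover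
    _ ≤ ∑ P ∈ ℓ, ((A.filter (fun m => P ∈ m)).erase ℓ).card := card_biUnion_le
    _ ≤ ∑ _P ∈ ℓ, (k - 1) := sum_le_sum fun P hP => by
        rw [card_erase_of_mem (mem_filter.mpr ⟨hℓ, hP⟩)]
        exact Nat.sub_le_sub_right (hval P hP) 1
    _ = ℓ.card * (k - 1) := by rw [sum_const, smul_eq_mul]

theorem stmt_6_general {α : Type*} [DecidableEq α] (n a : ℕ) (hn : 2 ≤ n)
    (S : Finset α) (A : Finset (Finset α))
    (hS : S.card = n ^ 2)
    (hlines : ∀ L ∈ A, L ⊆ S ∧ L.card = n)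
    (hmeet : ∀ L ∈ A, ∀ M ∈ A, L ≠ M → (L ∩ M).card ≤ 1)
    (hb : A.card = n ^ 2 - a)
    (hnofull : ∀ P ∈ S, valency A P ≠ n + 1) :
    ∀ ℓ ∈ A, n - a ≤ (A.filter (fun m => m = ℓ ∨ m ∩ ℓ = ∅)).card := by
  intro ℓ hℓ
  have hval : ∀ P ∈ ℓ, valency A P ≤ n := fun P hP => by
    have hPS := (hlines ℓ hℓ).1 hP
    have hle := valency_le_succ hn hS hlines hmeet hPS
    have hne := hnofull P hPS
    omega
  have hnonpar := card_filter_not_parallel_le hℓ hval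
  have hsplit := card_filter_add_card_filter_not (s := A) (fun m => m = ℓ ∨ m ∩ ℓ = ∅)
  rw [(hlines ℓ hℓ).2] at hnonpar
  have hsq : n * (n - 1) + n = n ^ 2 := by
    rw [Nat.mul_sub_one, sq, Nat.sub_add_cancel (Nat.le_mul_self n)]
  omega

/-- in a partial affine plane of order n with n² − a lines (1 ≤ a ≤ n − 1)
and no point of valency n + 1, every line is parallel to at least n − a lines
(including itself). -/
theorem stmt_6 {α : Type*} [DecidableEq α] (n a : ℕ) (hn : 2 ≤ n)
    (ha1 : 1 ≤ a) (ha2 : a ≤ n - 1)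
    (S : Finset α) (A : Finset (Finset α))
    (hS : S.card = n ^ 2)
    (hlines : ∀ L ∈ A, L ⊆ S ∧ L.card = n)
    (hmeet : ∀ L ∈ A, ∀ M ∈ A, L ≠ M → (L ∩ M).card ≤ 1)
    (hb : A.card = n ^ 2 - a)
    (hnofull : ∀ P ∈ S, valency A P ≠ n + 1) :
    ∀ ℓ ∈ A, n - a ≤ (A.filter (fun m => m = ℓ ∨ m ∩ ℓ = ∅)).card :=
  stmt_6_general n a hn S A hS hlines hmeet hb hnofull
end

section
/- For every prime power q there exists a partial affine plane of order q² with exactly q⁴ − q lines in which parallelism is an equivalence relation on the line set and which cannot be completed to an affine plane of order q². -/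
/-!
Let `F ⊆ K` be finite fields with `|F| = q` and `|K| = q²`. In `PG(2, K)` the points with
`F`-rational coordinates form a Baer subplane `B ≅ PG(2, F)`. Every line `a` meets `B`, since
`v ↦ a ⬝ᵥ v` is additive from `F³` to the smaller group `K`; it meets `B` in one point (a tangent)
or in at least two, and then it is a line of `B`. Delete `B`, keep only the tangents, and pad with
`q` isolated points: this gives `q⁴` points and `q⁴ - q` lines of size `q²`. Two tangents are
disjoint off `B` exactly when they touch `B` at the same point, so parallelism is "same point of
contact", an equivalence. Each point of `B` lies on `q² + 1` lines, only `q + 1` of them lines of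
`B`, so it lies on a tangent; tangents at distinct points of `B` meet off `B`. This gives
`q² + q + 1` pairwise non-parallel lines, whereas an affine plane of order `q²` has only `q² + 1`
parallel classes.
-/

open Finset

structure IsAffinePlane {β : Type*} (n : ℕ) (S : Finset β) (A : Finset (Finset β)) : Prop where
  subset_of_mem : ∀ L ∈ A, L ⊆ S
  card_of_mem : ∀ L ∈ A, #L = n
  existsUnique_line : ∀ x ∈ S, ∀ y ∈ S, x ≠ y → ∃! L, L ∈ A ∧ x ∈ L ∧ y ∈ L

namespace IsAffinePlane

variable {β : Type*} [DecidableEq β] {n : ℕ} {S : Finset β} {A : Finset (Finset β)}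

theorem card_filter_mem (h : IsAffinePlane n S A) (hn : 2 ≤ n) (hS : #S = n ^ 2) {x : β}
    (hx : x ∈ S) : #{L ∈ A | x ∈ L} = n + 1 := by
  set E := {L ∈ A | x ∈ L}
  have hdisj : (E : Set (Finset β)).PairwiseDisjoint (·.erase x) := by
    intro L hL M hM hLM
    simp only [E, mem_coe, mem_filter] at hL hM
    refine Finset.disjoint_left.mpr fun y hyL hyM ↦ hLM ?_
    rw [mem_erase] at hyL hyM
    exact (h.existsUnique_line x hx y (h.subset_of_mem L hL.1 hyL.2) (Ne.symm hyL.1)).unique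
      ⟨hL.1, hL.2, hyL.2⟩ ⟨hM.1, hM.2, hyM.2⟩
  have hcover : E.biUnion (·.erase x) = S.erase x := by
    ext y
    simp only [mem_biUnion, mem_erase, mem_filter, E]
    constructor
    · rintro ⟨L, ⟨hLA, -⟩, hyx, hyL⟩
      exact ⟨hyx, h.subset_of_mem L hLA hyL⟩
    · rintro ⟨hyx, hyS⟩
      obtain ⟨L, hLA, hxL, hyL⟩ := (h.existsUnique_line x hx y hyS (Ne.symm hyx)).exists
      exact ⟨L, ⟨hLA, hxL⟩, hyx, hyL⟩
  have hcount : #E * (n - 1) = (n + 1) * (n - 1) := by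
    rw [← sum_const_nat fun L hL ↦ ?_, ← card_biUnion hdisj, hcover, card_erase_of_mem hx, hS]
    · zify [show 1 ≤ n by omega, show 1 ≤ n ^ 2 by nlinarith]
      ring
    · rw [mem_filter] at hL
      rw [card_erase_of_mem hL.2, h.card_of_mem L hL.1]
  exact Nat.eq_of_mul_eq_mul_right (by omega) hcount

theorem card_filter_mem_not_disjoint (h : IsAffinePlane n S A) {L : Finset β} (hL : L ∈ A)
    {x : β} (hx : x ∈ S) (hxL : x ∉ L) : #{M ∈ A | x ∈ M ∧ ¬ Disjoint L M} = n := by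
  have hline : ∀ y ∈ L, ∃! M, M ∈ A ∧ x ∈ M ∧ y ∈ M := fun y hy ↦
    h.existsUnique_line x hx y (h.subset_of_mem L hL hy) (ne_of_mem_of_not_mem hy hxL).symm
  rw [← h.card_of_mem L hL, eq_comm]
  refine card_bij (fun y hy ↦ (hline y hy).exists.choose) (fun y hy ↦ ?_) (fun y hy z hz hyz ↦ ?_)
    (fun M hM ↦ ?_)
  · obtain ⟨hMA, hxM, hyM⟩ := (hline y hy).exists.choose_spec
    exact mem_filter.mpr ⟨hMA, hxM, not_disjoint_iff.mpr ⟨y, hy, hyM⟩⟩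
  · obtain ⟨hMA, hxM, hyM⟩ := (hline y hy).exists.choose_spec
    have hzM := hyz ▸ (hline z hz).exists.choose_spec.2.2
    by_contra hne
    have hLM := (h.existsUnique_line y (h.subset_of_mem L hL hy) z (h.subset_of_mem L hL hz)
      hne).unique ⟨hL, hy, hz⟩ ⟨hMA, hyM, hzM⟩
    exact hxL (hLM ▸ hxM)
  · obtain ⟨hMA, hxM, hLM⟩ := mem_filter.mp hM
    obtain ⟨y, hyL, hyM⟩ := not_disjoint_iff.mp hLM
    exact ⟨y, hyL, (hline y hyL).unique (hline y hyL).exists.choose_spec ⟨hMA, hxM, hyM⟩⟩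

theorem existsUnique_parallel (h : IsAffinePlane n S A) (hn : 2 ≤ n) (hS : #S = n ^ 2)
    {L : Finset β} (hL : L ∈ A) {x : β} (hx : x ∈ S) :
    ∃! M, M ∈ A ∧ x ∈ M ∧ (L = M ∨ Disjoint L M) := by
  by_cases hxL : x ∈ L
  · refine ⟨L, ⟨hL, hxL, Or.inl rfl⟩, fun M ⟨_, hxM, hLM⟩ ↦ ?_⟩
    exact (hLM.resolve_right (not_disjoint_iff.mpr ⟨x, hxL, hxM⟩)).symm
  have hsplit := card_filter_add_card_filter_not (s := {M ∈ A | x ∈ M})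
    (fun M ↦ Disjoint L M)
  rw [h.card_filter_mem hn hS hx, filter_filter, filter_filter,
    h.card_filter_mem_not_disjoint hL hx hxL] at hsplit
  obtain ⟨M₀, hM₀⟩ := card_eq_one.mp (by omega : #{M ∈ A | x ∈ M ∧ Disjoint L M} = 1)
  have hpar : ∀ M, (M ∈ A ∧ x ∈ M ∧ (L = M ∨ Disjoint L M)) ↔ M = M₀ := by
    intro M
    have hM := Finset.ext_iff.mp hM₀ M
    rw [mem_filter, mem_singleton] at hM
    rw [← hM]
    refine and_congr_right fun _ ↦ and_congr_right fun hxM ↦ or_iff_right ?_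
    rintro rfl
    exact hxL hxM
  exact ⟨M₀, (hpar M₀).mpr rfl, fun M hM ↦ (hpar M).mp hM⟩

theorem card_le_of_pairwise_not_disjoint (h : IsAffinePlane n S A) (hn : 2 ≤ n)
    (hS : #S = n ^ 2) {C : Finset (Finset β)} (hCA : C ⊆ A)
    (hC : ∀ L ∈ C, ∀ M ∈ C, L ≠ M → ¬ Disjoint L M) : #C ≤ n + 1 := by
  obtain ⟨x, hx⟩ : S.Nonempty := card_pos.mp (by rw [hS]; positivity)
  choose! par hparA hxpar hpar using
    fun L (hL : L ∈ A) ↦ (h.existsUnique_parallel hn hS hL hx).exists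
  rw [← h.card_filter_mem hn hS hx]
  refine card_le_card_of_injOn par (fun L hL ↦ ?_) fun L hL M hM hLM ↦ ?_
  · exact mem_filter.mpr ⟨hparA L (hCA hL), hxpar L (hCA hL)⟩
  by_contra hne
  obtain ⟨z, hzL, hzM⟩ := not_disjoint_iff.mp (hC L hL M hM hne)
  have hsymm : ∀ N ∈ C, par N = N ∨ Disjoint (par N) N := fun N hN ↦
    (hpar N (hCA hN)).imp Eq.symm fun hd ↦ hd.symm
  exact hne ((h.existsUnique_parallel hn hS (hparA L (hCA hL))
    (h.subset_of_mem L (hCA hL) hzL)).unique ⟨hCA hL, hzL, hsymm L hL⟩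
    ⟨hCA hM, hzM, hLM ▸ hsymm M hM⟩)

end IsAffinePlane

namespace Configuration.ProjectivePlane

open scoped Classical

variable {P L : Type*} [Membership P L] [Fintype P]

def IsTangent (B : Finset P) (l : L) : Prop := ∃! p, p ∈ B ∧ p ∈ l

noncomputable def affinePart (B : Finset P) (l : L) : Finset P := {p | p ∈ l ∧ p ∉ B}

noncomputable def residualPoints (B : Finset P) (α : Type*) [Fintype α] : Finset (P ⊕ α) :=
  Bᶜ.disjSum univ

variable (L) in
noncomputable def residualLines [Fintype L] (B : Finset P) (α : Type*) :
    Finset (Finset (P ⊕ α)) :=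
  ({l : L | IsTangent B l} : Finset L).image fun l ↦ (affinePart B l).map Function.Embedding.inl

variable {B : Finset P} {α : Type*}

@[simp]
theorem mem_affinePart {p : P} {l : L} : p ∈ affinePart B l ↔ p ∈ l ∧ p ∉ B := by
  simp [affinePart]

theorem mem_residualLines [Fintype L] {M : Finset (P ⊕ α)} :
    M ∈ residualLines L B α ↔
      ∃ l : L, IsTangent B l ∧ (affinePart B l).map Function.Embedding.inl = M := by
  simp [residualLines]

theorem card_residualPoints [Fintype α] :
    #(residualPoints B α) = Fintype.card P - #B + Fintype.card α := by
  rw [residualPoints, card_disjSum, card_compl, card_univ]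

theorem subset_residualPoints [Fintype L] [Fintype α] {M : Finset (P ⊕ α)}
    (hM : M ∈ residualLines L B α) : M ⊆ residualPoints B α := by
  obtain ⟨l, -, rfl⟩ := mem_residualLines.mp hM
  intro x hx
  obtain ⟨p, hp, rfl⟩ := mem_map.mp hx
  exact inl_mem_disjSum.mpr (mem_compl.mpr (mem_affinePart.mp hp).2)

variable [ProjectivePlane P L]

theorem card_affinePart_inter_le_one {l m : L} (hlm : l ≠ m) :
    #(affinePart B l ∩ affinePart B m) ≤ 1 := by
  refine card_le_one.mpr fun x hx y hy ↦ ?_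
  simp only [mem_inter, mem_affinePart] at hx hy
  exact (Nondegenerate.eq_or_eq hx.1.1 hy.1.1 hx.2.1 hy.2.1).resolve_right hlm

variable [Fintype L]

variable (P) in
theorem card_filter_line_mem (p : P) : #{l : L | p ∈ l} = order P L + 1 := by
  rw [← Fintype.card_subtype, ← Nat.card_eq_fintype_card]
  exact lineCount_eq L p

variable (L) in
theorem card_filter_mem_line (l : L) : #{p : P | p ∈ l} = order P L + 1 := by
  rw [← Fintype.card_subtype, ← Nat.card_eq_fintype_card]
  exact pointCount_eq P l

theorem card_affinePart {l : L} (hl : IsTangent B l) : #(affinePart B l) = order P L := by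
  obtain ⟨b, ⟨hbB, hbl⟩, hb⟩ := hl
  have hsplit := card_filter_add_card_filter_not (s := {p : P | p ∈ l}) (· ∈ B)
  have htouch : #{p ∈ {p : P | p ∈ l} | p ∈ B} = 1 :=
    card_eq_one.mpr ⟨b, by
      ext p
      simp only [filter_filter, mem_filter, mem_univ, true_and, mem_singleton]
      exact ⟨fun hp ↦ hb p hp.symm, by rintro rfl; exact ⟨hbl, hbB⟩⟩⟩
  rw [card_filter_mem_line L l, htouch, filter_filter] at hsplit
  rw [affinePart]
  omega

theorem eq_of_affinePart_eq {l m : L} (hl : IsTangent B l) (h : affinePart B l = affinePart B m) :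
    l = m := by
  have : 1 < #(affinePart B l) := card_affinePart hl ▸ one_lt_order P L
  obtain ⟨x, hx, y, hy, hxy⟩ := one_lt_card.mp this
  have hxm := h ▸ hx
  have hym := h ▸ hy
  simp only [mem_affinePart] at hx hy hxm hym
  exact (Nondegenerate.eq_or_eq hx.1 hy.1 hxm.1 hym.1).resolve_left hxy

theorem eq_or_disjoint_affinePart_iff {l m : L} (hl : IsTangent B l) :
    (affinePart B l = affinePart B m ∨ Disjoint (affinePart B l) (affinePart B m)) ↔
      ∃ p ∈ B, p ∈ l ∧ p ∈ m := by
  constructor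
  · intro h
    by_cases hlm : l = m
    · obtain ⟨p, hpB, hpl⟩ := hl.exists
      exact ⟨p, hpB, hpl, hlm ▸ hpl⟩
    have h : Disjoint (affinePart B l) (affinePart B m) :=
      h.resolve_left fun h ↦ hlm (eq_of_affinePart_eq hl h)
    obtain ⟨hpl, hpm⟩ := HasPoints.mkPoint_ax (P := P) hlm
    refine ⟨HasPoints.mkPoint hlm, ?_, hpl, hpm⟩
    by_contra hpB
    exact disjoint_left.mp h (mem_affinePart.mpr ⟨hpl, hpB⟩) (mem_affinePart.mpr ⟨hpm, hpB⟩)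
  · rintro ⟨p, hpB, hpl, hpm⟩
    by_cases hlm : l = m
    · exact Or.inl (hlm ▸ rfl)
    refine Or.inr (disjoint_left.mpr fun x hxl hxm ↦ ?_)
    rw [mem_affinePart] at hxl hxm
    obtain rfl | rfl := Nondegenerate.eq_or_eq hxl.1 hpl hxm.1 hpm
    · exact hxl.2 hpB
    · exact hlm rfl

theorem map_inl_eq_or_inter_eq_empty_iff [DecidableEq α] {l m : L} (hl : IsTangent B l) :
    ((affinePart B l).map (Function.Embedding.inl (β := α)) = (affinePart B m).map .inl ∨
        (affinePart B l).map (Function.Embedding.inl (β := α)) ∩ (affinePart B m).map .inl = ∅) ↔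
      ∃ p ∈ B, p ∈ l ∧ p ∈ m := by
  rw [map_inj, ← map_inter, map_eq_empty, ← disjoint_iff_inter_eq_empty,
    eq_or_disjoint_affinePart_iff hl]

theorem card_residualLines : #(residualLines L B α) = #{l : L | IsTangent B l} := by
  refine card_image_of_injOn fun l hl m _ hlm ↦ eq_of_affinePart_eq ?_ (map_injective _ hlm)
  simpa using hl

theorem card_of_mem_residualLines {M : Finset (P ⊕ α)} (hM : M ∈ residualLines L B α) :
    #M = order P L := by
  obtain ⟨l, hl, rfl⟩ := mem_residualLines.mp hM
  rw [card_map, card_affinePart hl]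

theorem card_inter_le_one_of_mem_residualLines [DecidableEq α] {M N : Finset (P ⊕ α)}
    (hM : M ∈ residualLines L B α) (hN : N ∈ residualLines L B α) (hMN : M ≠ N) :
    #(M ∩ N) ≤ 1 := by
  obtain ⟨l, -, rfl⟩ := mem_residualLines.mp hM
  obtain ⟨m, -, rfl⟩ := mem_residualLines.mp hN
  rw [← map_inter, card_map]
  exact card_affinePart_inter_le_one fun hlm ↦ hMN (hlm ▸ rfl)

theorem equivalence_residualLines [DecidableEq α] :
    Equivalence fun M N : {x // x ∈ residualLines L B α} ↦ M.1 = N.1 ∨ M.1 ∩ N.1 = ∅ := by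
  refine ⟨fun _ ↦ Or.inl rfl, fun h ↦ h.imp Eq.symm fun h ↦ by rwa [inter_comm], ?_⟩
  rintro ⟨M₁, hM₁⟩ ⟨M₂, hM₂⟩ ⟨M₃, hM₃⟩ h₁₂ h₂₃
  obtain ⟨l₁, hl₁, rfl⟩ := mem_residualLines.mp hM₁
  obtain ⟨l₂, hl₂, rfl⟩ := mem_residualLines.mp hM₂
  obtain ⟨l₃, -, rfl⟩ := mem_residualLines.mp hM₃
  obtain ⟨p, hpB, hp₁, hp₂⟩ := (map_inl_eq_or_inter_eq_empty_iff hl₁).mp h₁₂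
  obtain ⟨p', hp'B, hp'₂, hp'₃⟩ := (map_inl_eq_or_inter_eq_empty_iff hl₂).mp h₂₃
  obtain rfl : p' = p := hl₂.unique ⟨hp'B, hp'₂⟩ ⟨hpB, hp₂⟩
  exact (map_inl_eq_or_inter_eq_empty_iff hl₁).mpr ⟨p', hp'B, hp₁, hp'₃⟩

end Configuration.ProjectivePlane

namespace Configuration

structure PlaneEmbedding (P' L' P L : Type*) [Membership P' L'] [Membership P L] where
  pointMap : P' ↪ P
  lineMap : L' ↪ L
  mem_iff : ∀ p l, pointMap p ∈ lineMap l ↔ p ∈ l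

namespace PlaneEmbedding

open ProjectivePlane
open scoped Classical

variable {P' L' P L : Type*} [Membership P' L'] [Membership P L] [ProjectivePlane P' L']
  [ProjectivePlane P L] [Fintype P'] [Fintype L'] (e : PlaneEmbedding P' L' P L)

def points : Finset P := univ.map e.pointMap

omit [ProjectivePlane P L] in
theorem card_points : #e.points = order P' L' ^ 2 + order P' L' + 1 := by
  rw [points, card_map, card_univ, ProjectivePlane.card_points P' L']

variable {e}

theorem isTangent_iff (he : ∀ l : L, ∃ p, e.pointMap p ∈ l) {l : L} :
    IsTangent e.points l ↔ l ∉ Set.range e.lineMap := by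
  constructor
  · rintro ⟨b, -, hb⟩ ⟨l', rfl⟩
    have : 1 < #{p : P' | p ∈ l'} := by
      rw [card_filter_mem_line L' l']
      have := one_lt_order P' L'
      omega
    obtain ⟨x, hx, y, hy, hxy⟩ := one_lt_card.mp this
    rw [mem_filter] at hx hy
    have hxb := hb _ ⟨mem_map_of_mem _ (mem_univ x), (e.mem_iff x l').mpr hx.2⟩
    have hyb := hb _ ⟨mem_map_of_mem _ (mem_univ y), (e.mem_iff y l').mpr hy.2⟩
    exact hxy (e.pointMap.injective (hxb.trans hyb.symm))
  · intro hl
    obtain ⟨x, hx⟩ := he l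
    refine ⟨e.pointMap x, ⟨mem_map_of_mem _ (mem_univ x), hx⟩, ?_⟩
    rintro _ ⟨hp, hpl⟩
    obtain ⟨y, -, rfl⟩ := mem_map.mp hp
    by_contra hyx
    have hne : y ≠ x := fun h ↦ hyx (h ▸ rfl)
    obtain ⟨hy', hx'⟩ := HasLines.mkLine_ax (L := L') hne
    obtain h | h :=
      Nondegenerate.eq_or_eq hpl hx ((e.mem_iff _ _).mpr hy') ((e.mem_iff _ _).mpr hx')
    · exact hyx h
    · exact hl ⟨_, h.symm⟩

theorem card_filter_isTangent [Fintype L] (he : ∀ l : L, ∃ p, e.pointMap p ∈ l) :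
    #{l : L | IsTangent e.points l} = Fintype.card L - (order P' L' ^ 2 + order P' L' + 1) := by
  have : ({l : L | IsTangent e.points l} : Finset L) = univ \ univ.map e.lineMap := by
    ext l
    simp [isTangent_iff he]
  rw [this, card_univ_sdiff, card_map, card_univ, card_lines P' L']

theorem exists_isTangent_mem [Fintype P] [Fintype L] (he : ∀ l : L, ∃ p, e.pointMap p ∈ l)
    (horder : order P' L' < order P L) (x : P') :
    ∃ l : L, IsTangent e.points l ∧ e.pointMap x ∈ l := by
  by_contra! h
  have hsub : ({l : L | e.pointMap x ∈ l} : Finset L) ⊆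
      ({l' : L' | x ∈ l'} : Finset L').map e.lineMap := by
    intro l hl
    rw [mem_filter] at hl
    obtain ⟨l', rfl⟩ := not_not.mp (mt (isTangent_iff he).mpr fun ht ↦ h l ht hl.2)
    exact mem_map_of_mem _ (mem_filter.mpr ⟨mem_univ _, (e.mem_iff x l').mp hl.2⟩)
  have := card_le_card hsub
  rw [card_map, card_filter_line_mem, card_filter_line_mem] at this
  omega

theorem not_isAffinePlane [Fintype P] [Fintype L] {α : Type*} [Fintype α] [DecidableEq α]
    (he : ∀ l : L, ∃ p, e.pointMap p ∈ l) (horder : order P L = order P' L' ^ 2)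
    (hS : #(residualPoints e.points α) = order P L ^ 2) {A : Finset (Finset (P ⊕ α))}
    (hA : residualLines L e.points α ⊆ A) :
    ¬ IsAffinePlane (order P L) (residualPoints e.points α) A := by
  intro haff
  have hm := one_lt_order P' L'
  choose t ht hxt using exists_isTangent_mem he (by rw [horder]; nlinarith)
  let line (x : P') : Finset (P ⊕ α) := (affinePart e.points (t x)).map .inl
  have hsep : ∀ x y, (line x = line y ∨ line x ∩ line y = ∅) → x = y := by
    intro x y hxy
    obtain ⟨p, hp, hpx, hpy⟩ := (map_inl_eq_or_inter_eq_empty_iff (ht x)).mp hxy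
    have hx := (ht x).unique ⟨hp, hpx⟩ ⟨mem_map_of_mem _ (mem_univ x), hxt x⟩
    have hy := (ht y).unique ⟨hp, hpy⟩ ⟨mem_map_of_mem _ (mem_univ y), hxt y⟩
    exact e.pointMap.injective (hx.symm.trans hy)
  have hC := haff.card_le_of_pairwise_not_disjoint (one_lt_order P L) hS (C := univ.image line)
    (fun M hM ↦ ?_) (fun M hM N hN hMN hMN' ↦ ?_)
  · rw [card_image_of_injective _ fun x y h ↦ hsep x y (Or.inl h), card_univ,
      ProjectivePlane.card_points P' L', horder] at hC
    omega
  · obtain ⟨x, -, rfl⟩ := mem_image.mp hM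
    exact hA (mem_residualLines.mpr ⟨t x, ht x, rfl⟩)
  · obtain ⟨x, -, rfl⟩ := mem_image.mp hM
    obtain ⟨y, -, rfl⟩ := mem_image.mp hN
    exact hMN (hsep x y (Or.inr (disjoint_iff_inter_eq_empty.mp hMN')) ▸ rfl)

end PlaneEmbedding

open ProjectivePlane in
theorem PlaneEmbedding.exists_partialAffinePlane {P' L' P L : Type}
    [Membership P' L'] [Membership P L] [ProjectivePlane P' L'] [ProjectivePlane P L]
    [Fintype P'] [Fintype L'] [Fintype P] [Fintype L] (e : PlaneEmbedding P' L' P L)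
    (he : ∀ l : L, ∃ p, e.pointMap p ∈ l) {m : ℕ} (hm' : order P' L' = m)
    (hm : order P L = m ^ 2) :
    ∃ (β : Type) (_ : DecidableEq β) (S : Finset β) (A : Finset (Finset β)),
      #S = (m ^ 2) ^ 2 ∧
      (∀ M ∈ A, M ⊆ S ∧ #M = m ^ 2) ∧
      (∀ M ∈ A, ∀ N ∈ A, M ≠ N → #(M ∩ N) ≤ 1) ∧
      #A = m ^ 4 - m ∧
      Equivalence (fun M N : {x // x ∈ A} ↦ M.1 = N.1 ∨ M.1 ∩ N.1 = ∅) ∧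
      ¬ ∃ A' : Finset (Finset β), A ⊆ A' ∧ (∀ M ∈ A', M ⊆ S ∧ #M = m ^ 2) ∧
        ∀ x ∈ S, ∀ y ∈ S, x ≠ y → ∃! M, M ∈ A' ∧ x ∈ M ∧ y ∈ M := by
  classical
  have hcard := ProjectivePlane.card_points P L
  have hmm : m ≤ m ^ 4 := Nat.le_self_pow (by norm_num) m
  have hS : #(residualPoints e.points (Fin m)) = (m ^ 2) ^ 2 := by
    rw [card_residualPoints, e.card_points, Fintype.card_fin, hcard, hm, hm']
    ring_nf
    omega
  refine ⟨P ⊕ Fin m, inferInstance, residualPoints e.points (Fin m),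
    residualLines L e.points (Fin m), hS,
    fun M hM ↦ ⟨subset_residualPoints hM, hm ▸ card_of_mem_residualLines hM⟩,
    fun M hM N hN ↦ card_inter_le_one_of_mem_residualLines hM hN, ?_,
    equivalence_residualLines, ?_⟩
  · rw [card_residualLines, e.card_filter_isTangent he, card_lines P L, hm, hm']
    ring_nf
    omega
  · rintro ⟨A', hA'A, hA', hcov⟩
    exact e.not_isAffinePlane he (by rw [hm, hm']) (hm ▸ hS) hA'A
      ⟨fun M hM ↦ (hA' M hM).1, fun M hM ↦ hm ▸ (hA' M hM).2, hcov⟩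

end Configuration

open scoped LinearAlgebra.Projectivization
open Projectivization Configuration

def RingHom.compLeftSemilinear {F K : Type*} [Semiring F] [Semiring K] (σ : F →+* K)
    (ι : Type*) : (ι → F) →ₛₗ[σ] (ι → K) where
  toFun v := σ ∘ v
  map_add' v w := by ext; simp
  map_smul' c v := by ext; simp

theorem RingHom.comp_crossProduct {F K : Type*} [CommRing F] [CommRing K] (σ : F →+* K)
    (v w : Fin 3 → F) : σ ∘ crossProduct v w = crossProduct (σ ∘ v) (σ ∘ w) := by
  ext i
  fin_cases i <;> simp [cross_apply]

namespace Projectivization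

variable {F K : Type*} [Field F] [Field K]

theorem order_eq_natCard [DecidableEq K] [Fintype (ℙ K (Fin 3 → K))] [Finite K] :
    ProjectivePlane.order (ℙ K (Fin 3 → K)) (ℙ K (Fin 3 → K)) = Nat.card K := by
  have h := ProjectivePlane.card_points (ℙ K (Fin 3 → K)) (ℙ K (Fin 3 → K))
  rw [← Nat.card_eq_fintype_card, card_of_finrank K (Fin 3 → K) (Module.finrank_fin_fun K)] at h
  simp only [Finset.sum_range_succ, Finset.sum_range_zero] at h
  nlinarith

def mapRingHom (σ : F →+* K) : ℙ F (Fin 3 → F) → ℙ K (Fin 3 → K) :=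
  map (σ.compLeftSemilinear (Fin 3)) (σ.injective.comp_left)

theorem mapRingHom_mk (σ : F →+* K) {v : Fin 3 → F} (hv : v ≠ 0) :
    mapRingHom σ (mk F v hv) =
      mk K (σ ∘ v) (map_zero (σ.compLeftSemilinear (Fin 3)) ▸ σ.injective.comp_left.ne hv) :=
  rfl

theorem mapRingHom_injective (σ : F →+* K) : Function.Injective (mapRingHom σ) := by
  intro a b hab
  induction a with | h v hv => induction b with | h w hw =>
  rw [mapRingHom_mk, mapRingHom_mk, mk_eq_mk_iff_crossProduct_eq_zero, ← σ.comp_crossProduct] at hab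
  rw [mk_eq_mk_iff_crossProduct_eq_zero]
  exact σ.injective.comp_left (hab.trans (by ext; simp))

theorem orthogonal_mapRingHom_iff (σ : F →+* K) {a b : ℙ F (Fin 3 → F)} :
    (mapRingHom σ a).orthogonal (mapRingHom σ b) ↔ a.orthogonal b := by
  induction a with | h v hv => induction b with | h w hw =>
  rw [mapRingHom_mk, mapRingHom_mk, orthogonal_mk, orthogonal_mk, ← RingHom.map_dotProduct,
    map_eq_zero_iff σ σ.injective]

theorem exists_mapRingHom_orthogonal [Finite F] [Finite K] (σ : F →+* K)
    (hcard : Nat.card K < Nat.card F ^ 3) (a : ℙ K (Fin 3 → K)) :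
    ∃ x, (mapRingHom σ x).orthogonal a := by
  induction a with | h a ha =>
  let φ : (Fin 3 → F) → K := fun v ↦ σ.compLeftSemilinear (Fin 3) v ⬝ᵥ a
  have hφ : ¬ Function.Injective φ := fun h ↦
    (Nat.card_le_card_of_injective φ h).not_gt (by simpa [Nat.card_fun] using hcard)
  obtain ⟨v, w, hφvw, hvw⟩ := Function.not_injective_iff.mp hφ
  refine ⟨mk F (v - w) (sub_ne_zero.mpr hvw), ?_⟩
  rw [mapRingHom_mk, orthogonal_mk]
  change σ.compLeftSemilinear (Fin 3) (v - w) ⬝ᵥ a = 0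
  rw [map_sub, sub_dotProduct, sub_eq_zero]
  exact hφvw

def planeEmbedding (σ : F →+* K) :
    PlaneEmbedding (ℙ F (Fin 3 → F)) (ℙ F (Fin 3 → F)) (ℙ K (Fin 3 → K)) (ℙ K (Fin 3 → K)) where
  pointMap := ⟨mapRingHom σ, mapRingHom_injective σ⟩
  lineMap := ⟨mapRingHom σ, mapRingHom_injective σ⟩
  mem_iff _ _ := orthogonal_mapRingHom_iff σ

end Projectivization

/-- for every prime power q there exists a partial affine plane of order q²
with exactly q⁴ − q lines in which parallelism is an equivalence relation and which cannot
be completed to an affine plane of order q². -/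
theorem stmt_14 (q : ℕ) (hq : IsPrimePow q) :
    ∃ (β : Type) (_ : DecidableEq β) (S : Finset β) (A : Finset (Finset β)),
      S.card = (q ^ 2) ^ 2 ∧
      (∀ L ∈ A, L ⊆ S ∧ L.card = q ^ 2) ∧
      (∀ L ∈ A, ∀ M ∈ A, L ≠ M → (L ∩ M).card ≤ 1) ∧
      A.card = q ^ 4 - q ∧
      Equivalence (fun (L M : {x // x ∈ A}) => L.1 = M.1 ∨ L.1 ∩ M.1 = ∅) ∧
      ¬ ∃ A' : Finset (Finset β), A ⊆ A' ∧ (∀ L ∈ A', L ⊆ S ∧ L.card = q ^ 2) ∧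
        ∀ P ∈ S, ∀ Q ∈ S, P ≠ Q → ∃! L, L ∈ A' ∧ P ∈ L ∧ Q ∈ L := by
  classical
  obtain ⟨p, e, hp, he, rfl⟩ := hq
  have : Fact p.Prime := ⟨Nat.prime_iff.mpr hp⟩
  let F := GaloisField p e
  let K := FiniteField.Extension F p 2
  have hF : Nat.card F = p ^ e := GaloisField.card p e he.ne'
  have hK : Nat.card K = (p ^ e) ^ 2 := by rw [FiniteField.natCard_extension, hF]
  have hq : 2 ≤ p ^ e := (Nat.prime_iff.mpr hp).two_le.trans (Nat.le_self_pow he.ne' p)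
  let := Fintype.ofFinite (ℙ F (Fin 3 → F))
  let := Fintype.ofFinite (ℙ K (Fin 3 → K))
  refine (planeEmbedding (algebraMap F K)).exists_partialAffinePlane (fun l ↦ ?_)
    (order_eq_natCard.trans hF) (order_eq_natCard.trans hK)
  refine exists_mapRingHom_orthogonal _ ?_ l
  rw [hK, hF]
  exact Nat.pow_lt_pow_right hq (by norm_num)
end

section
/- Let n, d ≥ 2 and let (S, A) be a partial 3-(n^d + 1, n + 1, 1)-design such that for every point P the derived structure I_P can be uniquely completed to a full 2-(n^d, n, 1)-design I'_P. Suppose P is a point, ℓ is an added line of I'_P, and Q ∈ ℓ is a simple point of I'_P. Then P is a simple point of I'_Q and {P} ∪ (ℓ \ {Q}) is an added line of I'_Q. -/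
/-!
Through two distinct points `P, Q` of `S`, the derived lines of `I_P` through `Q` and those of
`I_Q` through `P` both correspond to the circles through `P` and `Q`, so there are equally many
of them. Since `I'_P` and `I'_Q` are 2-designs with the same number of points and block size,
`Q` and `P` have the same total number of lines through them, hence also the same number of
added lines: `P` is simple in `I'_Q` as soon as `Q` is simple in `I'_P`. If `X ∈ ℓ \ {Q}`, the
line of `I'_Q` through `P` and `X` cannot come from a circle, since that circle would give a line
of `I_P` through `Q` and `X`, i.e. `ℓ`. So `{P} ∪ (ℓ \ {Q})` lies in the unique added line of
`I'_Q` through `P`, and equality follows by counting.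
-/

open Finset

/-- The lines of the derived structure of `(S, A)` at the point `P`: for each circle `C` of
`A` through `P`, the set `C \ {P}`. -/
def derivedLines {α : Type*} [DecidableEq α] (A : Finset (Finset α)) (P : α) :
    Finset (Finset α) :=
  (A.filter (fun C => P ∈ C)).image (fun C => C.erase P)

/-- `B` is a completion of the derived structure of `(S, A)` at `P` to a full
2-(n^d, n, 1)-design on `S \ {P}`. -/
def IsDerivedCompletion {α : Type*} [DecidableEq α] (S : Finset α) (n : ℕ) (P : α)
    (A : Finset (Finset α)) (B : Finset (Finset α)) : Prop :=
  derivedLines A P ⊆ B ∧ (∀ L ∈ B, L ⊆ S.erase P ∧ L.card = n) ∧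
    ∀ X ∈ S.erase P, ∀ Y ∈ S.erase P, X ≠ Y → ∃! L, L ∈ B ∧ X ∈ L ∧ Y ∈ L

/-- A 2-(|T|, n, 1)-design on the point set `T`. -/
def IsSteinerSystem {α : Type*} (T : Finset α) (n : ℕ) (B : Finset (Finset α)) : Prop :=
  (∀ L ∈ B, L ⊆ T ∧ L.card = n) ∧ ∀ X ∈ T, ∀ Y ∈ T, X ≠ Y → ∃! L, L ∈ B ∧ X ∈ L ∧ Y ∈ L

namespace IsSteinerSystem

variable {α : Type*} {T : Finset α} {n : ℕ} {B : Finset (Finset α)}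

theorem eq_of_mem_of_mem (h : IsSteinerSystem T n B) {L L' : Finset α} (hL : L ∈ B)
    (hL' : L' ∈ B) {X Y : α} (hXY : X ≠ Y) (hXL : X ∈ L) (hYL : Y ∈ L) (hXL' : X ∈ L')
    (hYL' : Y ∈ L') : L = L' :=
  (h.2 X ((h.1 L hL).1 hXL) Y ((h.1 L hL).1 hYL) hXY).unique ⟨hL, hXL, hYL⟩ ⟨hL', hXL', hYL'⟩

variable [DecidableEq α]

theorem card_filter_mem_mul (h : IsSteinerSystem T n B) {X : α} (hX : X ∈ T) :
    (B.filter (X ∈ ·)).card * (n - 1) = T.card - 1 := by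
  -- the lines through `X` partition the other points of `T`
  have hcover : T.erase X = (B.filter (X ∈ ·)).biUnion (·.erase X) := by
    ext Y
    simp only [mem_erase, mem_biUnion, mem_filter]
    constructor
    · rintro ⟨hYX, hYT⟩
      obtain ⟨L, ⟨hL, hXL, hYL⟩, -⟩ := h.2 X hX Y hYT (Ne.symm hYX)
      exact ⟨L, ⟨hL, hXL⟩, hYX, hYL⟩
    · rintro ⟨L, ⟨hL, -⟩, hYX, hYL⟩
      exact ⟨hYX, (h.1 L hL).1 hYL⟩
  have hdisj : (B.filter (X ∈ ·) : Set (Finset α)).PairwiseDisjoint (·.erase X) := by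
    intro L hL L' hL' hne
    simp only [coe_filter, Set.mem_ofPred_eq] at hL hL'
    refine disjoint_left.mpr fun Y hY hY' => hne ?_
    rw [mem_erase] at hY hY'
    exact h.eq_of_mem_of_mem hL.1 hL'.1 (Ne.symm hY.1) hL.2 hY.2 hL'.2 hY'.2
  rw [← card_erase_of_mem hX, hcover, card_biUnion hdisj, sum_const_nat]
  intro L hL
  rw [mem_filter] at hL
  rw [card_erase_of_mem hL.2, (h.1 L hL.1).2]

theorem card_filter_mem_eq {T' : Finset α} {B' : Finset (Finset α)} (hn : 2 ≤ n)
    (h : IsSteinerSystem T n B) (h' : IsSteinerSystem T' n B') (hcard : T.card = T'.card)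
    {X X' : α} (hX : X ∈ T) (hX' : X' ∈ T') :
    (B.filter (X ∈ ·)).card = (B'.filter (X' ∈ ·)).card :=
  Nat.eq_of_mul_eq_mul_right (by omega : 0 < n - 1)
    ((h.card_filter_mem_mul hX).trans (hcard ▸ (h'.card_filter_mem_mul hX').symm))

end IsSteinerSystem

section DerivedLines

variable {α : Type*} [DecidableEq α] {A : Finset (Finset α)} {P Q : α}

theorem mem_derivedLines {m : Finset α} :
    m ∈ derivedLines A P ↔ ∃ C ∈ A, P ∈ C ∧ C.erase P = m := by
  simp [derivedLines, and_assoc]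

theorem insert_erase_mem_derivedLines {m : Finset α} (hm : m ∈ derivedLines A Q)
    (hPm : P ∈ m) : insert Q (m.erase P) ∈ derivedLines A P := by
  obtain ⟨C, hC, hQC, rfl⟩ := mem_derivedLines.mp hm
  refine mem_derivedLines.mpr ⟨C, hC, mem_of_mem_erase hPm, ?_⟩
  rw [erase_right_comm, insert_erase (mem_erase.mpr ⟨?_, hQC⟩)]
  rintro rfl
  exact notMem_erase _ C hPm

theorem card_filter_mem_derivedLines (hPQ : P ≠ Q) :
    ((derivedLines A P).filter (Q ∈ ·)).card = (A.filter (fun C => P ∈ C ∧ Q ∈ C)).card := by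
  have himage : (derivedLines A P).filter (Q ∈ ·) =
      (A.filter (fun C => P ∈ C ∧ Q ∈ C)).image (·.erase P) := by
    ext m
    simp only [mem_filter, mem_derivedLines, mem_image]
    constructor
    · rintro ⟨⟨C, hC, hPC, rfl⟩, hQm⟩
      exact ⟨C, ⟨hC, hPC, mem_of_mem_erase hQm⟩, rfl⟩
    · rintro ⟨C, ⟨hC, hPC, hQC⟩, rfl⟩
      exact ⟨⟨C, hC, hPC, rfl⟩, mem_erase.mpr ⟨Ne.symm hPQ, hQC⟩⟩
  rw [himage, card_image_of_injOn]
  exact (erase_injOn' P).mono fun C hC => (mem_filter.mp hC).2.1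

theorem card_filter_mem_derivedLines_comm (hPQ : P ≠ Q) :
    ((derivedLines A P).filter (Q ∈ ·)).card = ((derivedLines A Q).filter (P ∈ ·)).card := by
  simp only [card_filter_mem_derivedLines hPQ, card_filter_mem_derivedLines hPQ.symm, and_comm]

end DerivedLines

namespace IsDerivedCompletion

variable {α : Type*} [DecidableEq α] {S : Finset α} {n : ℕ} {A B B' : Finset (Finset α)}
  {P Q : α}

theorem isSteinerSystem (h : IsDerivedCompletion S n P A B) :
    IsSteinerSystem (S.erase P) n B :=
  h.2

theorem card_filter_added_add (h : IsDerivedCompletion S n P A B) (Q : α) :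
    (B.filter (fun m => Q ∈ m ∧ m ∉ derivedLines A P)).card +
      ((derivedLines A P).filter (Q ∈ ·)).card = (B.filter (Q ∈ ·)).card := by
  rw [← card_filter_add_card_filter_not (· ∈ derivedLines A P) (s := B.filter (Q ∈ ·)),
    filter_filter, filter_filter, add_comm]
  congr 2
  ext m
  simp only [mem_filter]
  exact ⟨fun ⟨hm, hQm⟩ => ⟨h.1 hm, hQm, hm⟩, fun ⟨_, hQm, hm⟩ => ⟨hm, hQm⟩⟩

theorem card_filter_added_comm (hn : 2 ≤ n) (hB : IsDerivedCompletion S n P A B)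
    (hB' : IsDerivedCompletion S n Q A B') (hP : P ∈ S) (hQ : Q ∈ S) (hPQ : P ≠ Q) :
    (B.filter (fun m => Q ∈ m ∧ m ∉ derivedLines A P)).card =
      (B'.filter (fun m => P ∈ m ∧ m ∉ derivedLines A Q)).card := by
  have htotal := hB.isSteinerSystem.card_filter_mem_eq hn hB'.isSteinerSystem
    (by rw [card_erase_of_mem hP, card_erase_of_mem hQ]) (mem_erase.mpr ⟨hPQ.symm, hQ⟩)
    (mem_erase.mpr ⟨hPQ, hP⟩)
  have hsplit := hB.card_filter_added_add Q
  have hsplit' := hB'.card_filter_added_add P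
  have hderived := card_filter_mem_derivedLines_comm (A := A) hPQ
  omega

theorem notMem_derivedLines_of_mem_added (hB : IsDerivedCompletion S n P A B)
    {ℓ : Finset α} (hℓ : ℓ ∈ B) (hadd : ℓ ∉ derivedLines A P) (hQℓ : Q ∈ ℓ) {X : α}
    (hXℓ : X ∈ ℓ) (hXQ : X ≠ Q) {L : Finset α} (hPL : P ∈ L) (hXL : X ∈ L) :
    L ∉ derivedLines A Q := by
  intro hL
  have hL' := insert_erase_mem_derivedLines hL hPL
  have hXP : X ≠ P := fun h => notMem_erase P S ((hB.2.1 ℓ hℓ).1 (h ▸ hXℓ))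
  have hL'ℓ : insert Q (L.erase P) = ℓ :=
    hB.isSteinerSystem.eq_of_mem_of_mem (hB.1 hL') hℓ hXQ.symm (mem_insert_self Q _)
      (mem_insert_of_mem (mem_erase.mpr ⟨hXP, hXL⟩)) hQℓ hXℓ
  exact hadd (hL'ℓ ▸ hL')

theorem insert_erase_eq_of_added (hB : IsDerivedCompletion S n P A B)
    (hB' : IsDerivedCompletion S n Q A B') (hP : P ∈ S) {ℓ : Finset α} (hℓ : ℓ ∈ B)
    (hadd : ℓ ∉ derivedLines A P) (hQℓ : Q ∈ ℓ) {m : Finset α} (hm : m ∈ B') (hPm : P ∈ m)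
    (honly : ∀ L ∈ B', P ∈ L → L ∉ derivedLines A Q → L = m) :
    insert P (ℓ.erase Q) = m := by
  have hℓS := (hB.2.1 ℓ hℓ).1
  have hPℓ : P ∉ ℓ := fun h => notMem_erase P S (hℓS h)
  have hPS : P ∈ S.erase Q := mem_erase.mpr ⟨fun h => hPℓ (h ▸ hQℓ), hP⟩
  have hsub : insert P (ℓ.erase Q) ⊆ m := by
    refine insert_subset hPm fun X hX => ?_
    obtain ⟨hXQ, hXℓ⟩ := mem_erase.mp hX
    have hXS : X ∈ S.erase Q := mem_erase.mpr ⟨hXQ, mem_of_mem_erase (hℓS hXℓ)⟩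
    obtain ⟨L, ⟨hL, hPL, hXL⟩, -⟩ := hB'.2.2 P hPS X hXS fun h => hPℓ (h ▸ hXℓ)
    rw [← honly L hL hPL (hB.notMem_derivedLines_of_mem_added hℓ hadd hQℓ hXℓ hXQ hPL hXL)]
    exact hXL
  refine eq_of_subset_of_card_le hsub ?_
  have hℓcard : ℓ.card = n := (hB.2.1 ℓ hℓ).2
  have hℓpos : 0 < ℓ.card := card_pos.mpr ⟨Q, hQℓ⟩
  rw [card_insert_of_notMem fun h => hPℓ (mem_of_mem_erase h), card_erase_of_mem hQℓ,
    (hB'.2.1 m hm).2]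
  omega

end IsDerivedCompletion

theorem stmt_15_general {α : Type*} [DecidableEq α] (n : ℕ) (hn : 2 ≤ n)
    (S : Finset α) (A : Finset (Finset α))
    (I' : α → Finset (Finset α))
    (hI' : ∀ P ∈ S, IsDerivedCompletion S n P A (I' P) ∧
      ∀ B, IsDerivedCompletion S n P A B → B = I' P)
    (P : α) (hP : P ∈ S)
    (ℓ : Finset α) (hℓ : ℓ ∈ I' P) (hadd : ℓ ∉ derivedLines A P)
    (Q : α) (hQ : Q ∈ ℓ)
    (hsimple : ((I' P).filter (fun m => Q ∈ m ∧ m ∉ derivedLines A P)).card = 1) :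
    ((I' Q).filter (fun m => P ∈ m ∧ m ∉ derivedLines A Q)).card = 1 ∧
      insert P (ℓ.erase Q) ∈ I' Q ∧ insert P (ℓ.erase Q) ∉ derivedLines A Q := by
  have hcP := (hI' P hP).1
  have hQS : Q ∈ S.erase P := (hcP.2.1 ℓ hℓ).1 hQ
  have hcQ := (hI' Q (mem_of_mem_erase hQS)).1
  have hone : ((I' Q).filter (fun m => P ∈ m ∧ m ∉ derivedLines A Q)).card = 1 :=
    (hcP.card_filter_added_comm hn hcQ hP (mem_of_mem_erase hQS) (ne_of_mem_erase hQS).symm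
      ).symm.trans hsimple
  obtain ⟨m, hm⟩ := card_eq_one.mp hone
  have hmem : m ∈ I' Q ∧ P ∈ m ∧ m ∉ derivedLines A Q :=
    mem_filter.mp (by rw [hm]; exact mem_singleton_self m)
  have heq : insert P (ℓ.erase Q) = m :=
    hcP.insert_erase_eq_of_added hcQ hP hℓ hadd hQ hmem.1 hmem.2.1 fun L hL hPL hLadd =>
      mem_singleton.mp (hm ▸ mem_filter.mpr ⟨hL, hPL, hLadd⟩)
  exact ⟨hone, heq ▸ hmem.1, heq ▸ hmem.2.2⟩

/-- in a partial 3-(n^d+1, n+1, 1)-design whose derived structures all admit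
a unique completion I'_P, if ℓ is an added line of I'_P and Q ∈ ℓ is a simple point of
I'_P, then P is a simple point of I'_Q and {P} ∪ (ℓ \ {Q}) is an added line of I'_Q. -/
theorem stmt_15 {α : Type*} [DecidableEq α] (n d : ℕ) (hn : 2 ≤ n) (hd : 2 ≤ d)
    (S : Finset α) (A : Finset (Finset α))
    (hS : S.card = n ^ d + 1)
    (hcircles : ∀ C ∈ A, C ⊆ S ∧ C.card = n + 1)
    (hdesign : ∀ P ∈ S, ∀ Q ∈ S, ∀ R ∈ S, P ≠ Q → P ≠ R → Q ≠ R →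
      (A.filter (fun C => P ∈ C ∧ Q ∈ C ∧ R ∈ C)).card ≤ 1)
    (I' : α → Finset (Finset α))
    (hI' : ∀ P ∈ S, IsDerivedCompletion S n P A (I' P) ∧
      ∀ B, IsDerivedCompletion S n P A B → B = I' P)
    (P : α) (hP : P ∈ S)
    (ℓ : Finset α) (hℓ : ℓ ∈ I' P) (hadd : ℓ ∉ derivedLines A P)
    (Q : α) (hQ : Q ∈ ℓ)
    (hsimple : ((I' P).filter (fun m => Q ∈ m ∧ m ∉ derivedLines A P)).card = 1) :
    ((I' Q).filter (fun m => P ∈ m ∧ m ∉ derivedLines A Q)).card = 1 ∧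
      insert P (ℓ.erase Q) ∈ I' Q ∧ insert P (ℓ.erase Q) ∉ derivedLines A Q :=
  stmt_15_general n hn S A I' hI' P hP ℓ hℓ hadd Q hQ hsimple
end
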